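/- arXiv:2003.09071 — 9 statements merged into one kernel-verified Lean document; each statement's English description precedes it below -/
import Mathlib

section
/- Suppose the measure μ has compact support and ∫₀^∞ g(r) dr = ∞ (i.e., ∫₀^ρ g(r) dr → ∞ as ρ → ∞). Then there exists a point x_c ∈ ℝⁿ with V(x_c) = 0. -/
open MeasureTheory Filter Set

/-- The radial vector field `v(y) = g(|y|) y/|y|` (with `v(0)=0`, since division by
zero yields zero and `y = 0` makes the whole expression vanish). -/
noncomputable def radialField {n : ℕ} (g : ℝ → ℝ)
    (y : EuclideanSpace ℝ (Fin n)) : EuclideanSpace ℝ (Fin n) :=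
  (g ‖y‖ / ‖y‖) • y

/-- The vector field `V(x) = ∫ v(x+y) dμ(y)`. -/
noncomputable def VField {n : ℕ} (g : ℝ → ℝ)
    (μ : Measure (EuclideanSpace ℝ (Fin n)))
    (x : EuclideanSpace ℝ (Fin n)) : EuclideanSpace ℝ (Fin n) :=
  ∫ y, radialField g (x + y) ∂μ

/-!
`V` is the gradient of the potential `Φ(x) = ∫ G(|x + y|) dμ(y)`, where `G` is the primitive
of `g` vanishing at `0`. As `μ` is supported in a ball and `G(ρ) → ∞`, `Φ` is coercive, so the
continuous function `Φ` attains a minimum, where its gradient `V` vanishes.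
Replacing `g` by `r ↦ g |r|` changes neither `V` nor `G` on `[0, ∞)` and makes `g` continuous
on all of `ℝ`.
-/

open scoped Topology

theorem HasDerivAt.hasFDerivAt_comp_norm_zero {E : Type*} [NormedAddCommGroup E]
    [NormedSpace ℝ E] {G : ℝ → ℝ} (hG : HasDerivAt G 0 0) :
    HasFDerivAt (fun w : E => G ‖w‖) (0 : E →L[ℝ] ℝ) 0 := by
  rw [hasFDerivAt_iff_isLittleO_nhds_zero]
  rw [hasDerivAt_iff_isLittleO_nhds_zero] at hG
  simp only [zero_add, smul_zero, sub_zero, norm_zero, zero_apply] at hG ⊢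
  have hnorm : Tendsto (‖·‖) (𝓝 (0 : E)) (𝓝 0) := by
    simpa using (continuous_norm (E := E)).tendsto 0
  exact (hG.comp_tendsto hnorm).trans_isBigO
    (Asymptotics.isBigO_norm_left.2 (Asymptotics.isBigO_refl _ _))

section NormCalculus

variable {F : Type*} [NormedAddCommGroup F] [InnerProductSpace ℝ F]

theorem hasFDerivAt_norm {z : F} (hz : z ≠ 0) :
    HasFDerivAt (‖·‖) (‖z‖⁻¹ • innerSL ℝ z) z := by
  have h := (hasStrictFDerivAt_norm_sq z).hasFDerivAt.sqrt (pow_ne_zero 2 (norm_ne_zero_iff.2 hz))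
  simp only [Real.sqrt_sq (norm_nonneg _)] at h
  convert h using 1
  ext w
  simp only [smul_apply, coe_innerSL_apply, smul_eq_mul, one_div, mul_inv_rev, nsmul_eq_mul,
    Nat.cast_ofNat]
  field_simp

theorem hasFDerivAt_integral_norm {g : ℝ → ℝ} (hg : Continuous g) (hg0 : g 0 = 0) (z : F) :
    HasFDerivAt (fun w : F => ∫ t in (0 : ℝ)..‖w‖, g t) ((g ‖z‖ / ‖z‖) • innerSL ℝ z) z := by
  have hG (r : ℝ) : HasDerivAt (fun u => ∫ t in (0 : ℝ)..u, g t) (g r) r :=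
    (hg.integral_hasStrictDerivAt 0 r).hasDerivAt
  rcases eq_or_ne z 0 with rfl | hz
  · simpa using (hg0 ▸ hG 0).hasFDerivAt_comp_norm_zero (E := F)
  · have h := (hG ‖z‖).comp_hasFDerivAt z (hasFDerivAt_norm hz)
    rwa [smul_smul, ← div_eq_mul_inv] at h

end NormCalculus

section RadialField

variable {n : ℕ}

@[simp]
theorem radialField_zero (g : ℝ → ℝ) : radialField g (0 : EuclideanSpace ℝ (Fin n)) = 0 := by
  simp [radialField]

theorem radialField_congr {g g' : ℝ → ℝ} (h : EqOn g g' (Ici 0)) :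
    radialField (n := n) g = radialField g' := by
  ext1 y
  rw [radialField, radialField, h (norm_nonneg y)]

theorem VField_congr {g g' : ℝ → ℝ} (h : EqOn g g' (Ici 0)) :
    VField (n := n) g = VField g' := by
  unfold VField
  rw [radialField_congr h]

theorem norm_radialField_le (g : ℝ → ℝ) (z : EuclideanSpace ℝ (Fin n)) :
    ‖radialField g z‖ ≤ |g ‖z‖| := by
  rcases eq_or_ne z 0 with rfl | hz
  · simp
  · rw [radialField, norm_smul, norm_div, Real.norm_eq_abs, norm_norm,
      div_mul_cancel₀ _ (norm_ne_zero_iff.2 hz)]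

theorem continuous_radialField {g : ℝ → ℝ} (hg : Continuous g) (hg0 : g 0 = 0) :
    Continuous (radialField (n := n) g) := by
  refine continuous_iff_continuousAt.2 fun z => ?_
  rcases eq_or_ne z 0 with rfl | hz
  · rw [ContinuousAt, radialField_zero]
    refine squeeze_zero_norm (norm_radialField_le g) ?_
    simpa [hg0] using ((hg.comp continuous_norm).abs.tendsto (0 : EuclideanSpace ℝ (Fin n)))
  · exact ((hg.comp continuous_norm).continuousAt.div continuous_norm.continuousAt
      (norm_ne_zero_iff.2 hz)).smul continuousAt_id

theorem innerSL_radialField (g : ℝ → ℝ) (z : EuclideanSpace ℝ (Fin n)) :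
    innerSL ℝ (radialField g z) = (g ‖z‖ / ‖z‖) • innerSL ℝ z :=
  map_smul _ _ _

end RadialField

theorem Continuous.integrable_of_ae_mem_compact {X β : Type*} [TopologicalSpace X] [T2Space X]
    [MeasurableSpace X] [OpensMeasurableSpace X] [NormedAddCommGroup β] {μ : Measure X}
    [IsFiniteMeasureOnCompacts μ] {K : Set X} (hK : IsCompact K) (hμK : ∀ᵐ x ∂μ, x ∈ K)
    {f : X → β} (hf : Continuous f) : Integrable f μ := by
  rw [← Measure.restrict_eq_self_of_ae_mem hμK]
  exact hf.continuousOn.integrableOn_compact hK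

theorem continuous_integral_norm {E : Type*} [SeminormedAddCommGroup E] {g : ℝ → ℝ}
    (hg : Continuous g) : Continuous fun w : E => ∫ t in (0 : ℝ)..‖w‖, g t :=
  (intervalIntegral.continuous_primitive (fun a b => hg.intervalIntegrable a b) 0).comp
    continuous_norm

noncomputable def potential {n : ℕ} (g : ℝ → ℝ) (μ : Measure (EuclideanSpace ℝ (Fin n)))
    (x : EuclideanSpace ℝ (Fin n)) : ℝ :=
  ∫ y, (∫ t in (0 : ℝ)..‖x + y‖, g t) ∂μ

section Potential

variable {n : ℕ} {g : ℝ → ℝ} {μ : Measure (EuclideanSpace ℝ (Fin n))} [IsFiniteMeasure μ]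
  {R : ℝ}

theorem integrable_comp_add_of_ae_norm_le (hR : ∀ᵐ y ∂μ, ‖y‖ ≤ R) {β : Type*}
    [NormedAddCommGroup β] {f : EuclideanSpace ℝ (Fin n) → β} (hf : Continuous f)
    (x : EuclideanSpace ℝ (Fin n)) : Integrable (fun y => f (x + y)) μ :=
  (hf.comp (continuous_const_add x)).integrable_of_ae_mem_compact (isCompact_closedBall 0 R)
    (by simpa using hR)

theorem hasFDerivAt_potential (hg : Continuous g) (hg0 : g 0 = 0) (hR : ∀ᵐ y ∂μ, ‖y‖ ≤ R)
    (x : EuclideanSpace ℝ (Fin n)) :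
    HasFDerivAt (potential g μ) (innerSL ℝ (VField g μ x)) x := by
  have hv_int := integrable_comp_add_of_ae_norm_le hR (continuous_radialField hg hg0)
  obtain ⟨M, hM⟩ := (isCompact_Icc (a := 0) (b := ‖x‖ + 1 + R)).exists_bound_of_continuousOn
    hg.continuousOn
  have hbound : ∀ᵐ y ∂μ, ∀ x' ∈ Metric.ball x 1,
      ‖innerSL ℝ (radialField g (x' + y))‖ ≤ M := by
    filter_upwards [hR] with y hy x' hx'
    rw [innerSL_apply_norm]
    refine (norm_radialField_le g _).trans (hM _ ⟨norm_nonneg _, ?_⟩)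
    linarith [norm_add_le x' y, norm_lt_of_mem_ball hx']
  have hderiv : ∀ᵐ y ∂μ, ∀ x' ∈ Metric.ball x 1, HasFDerivAt
      (fun x' => ∫ t in (0 : ℝ)..‖x' + y‖, g t) (innerSL ℝ (radialField g (x' + y))) x' := by
    refine .of_forall fun y x' _ => ?_
    have h := (hasFDerivAt_integral_norm hg hg0 (x' + y)).comp x' ((hasFDerivAt_id x').add_const y)
    rwa [ContinuousLinearMap.comp_id, ← innerSL_radialField] at h
  have h := hasFDerivAt_integral_of_dominated_of_fderiv_le (Metric.ball_mem_nhds x one_pos)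
    (.of_forall fun x' => (integrable_comp_add_of_ae_norm_le hR (continuous_integral_norm hg)
      x').aestronglyMeasurable)
    (integrable_comp_add_of_ae_norm_le hR (continuous_integral_norm hg) x)
    ((innerSL ℝ).integrable_comp (hv_int x)).aestronglyMeasurable hbound (integrable_const M)
    hderiv
  rwa [(innerSL ℝ).integral_comp_comm (hv_int x)] at h

theorem tendsto_potential_cocompact [NeZero μ] (hg : Continuous g)
    (hG : Tendsto (fun ρ => ∫ t in (0 : ℝ)..ρ, g t) atTop atTop) (hR : ∀ᵐ y ∂μ, ‖y‖ ≤ R) :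
    Tendsto (potential g μ) (cocompact _) atTop := by
  refine tendsto_atTop.2 fun b => ?_
  have hm : 0 < μ.real univ := measureReal_univ_pos
  obtain ⟨T, hT⟩ := eventually_atTop.1 (hG.eventually_ge_atTop (b / μ.real univ))
  filter_upwards [tendsto_norm_cocompact_atTop.eventually_ge_atTop (T + R)] with x hx
  have hG_ge : ∀ᵐ y ∂μ, b / μ.real univ ≤ ∫ t in (0 : ℝ)..‖x + y‖, g t := by
    filter_upwards [hR] with y hy
    refine hT _ ?_
    linarith [norm_le_add_norm_add x y]
  calc b = ∫ _, b / μ.real univ ∂μ := by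
        rw [integral_const, smul_eq_mul, mul_div_cancel₀ _ hm.ne']
    _ ≤ potential g μ x := integral_mono_ae (integrable_const _)
        (integrable_comp_add_of_ae_norm_le hR (continuous_integral_norm hg) x) hG_ge

end Potential

theorem center_of_mass_exists_compact_support_general {n : ℕ}
    (g : ℝ → ℝ) (hg_cont : ContinuousOn g (Ici 0)) (hg0 : g 0 = 0)
    (hg_int : Tendsto (fun ρ => ∫ r in (0:ℝ)..ρ, g r) atTop atTop)
    (μ : Measure (EuclideanSpace ℝ (Fin n)))
    (hμpos : 0 < μ Set.univ) (hμfin : μ Set.univ < ⊤)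
    (hμcpt : ∃ K : Set (EuclideanSpace ℝ (Fin n)), IsCompact K ∧ μ Kᶜ = 0) :
    ∃ xc : EuclideanSpace ℝ (Fin n), VField g μ xc = 0 := by
  have : IsFiniteMeasure μ := ⟨hμfin⟩
  have : NeZero μ := ⟨Measure.measure_univ_pos.1 hμpos⟩
  obtain ⟨K, hK, hμK⟩ := hμcpt
  obtain ⟨R, hKR⟩ := hK.isBounded.subset_closedBall 0
  have hR : ∀ᵐ y ∂μ, ‖y‖ ≤ R :=
    (measure_eq_zero_iff_ae_notMem.1 hμK).mono fun y hy => by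
      simpa using hKR (not_not.1 hy)
  set g' : ℝ → ℝ := fun r => g |r|
  have hg'g : EqOn g' g (Ici 0) := fun r hr => by simp [g', abs_of_nonneg (mem_Ici.1 hr)]
  have hg' : Continuous g' := hg_cont.comp_continuous continuous_abs abs_nonneg
  have hg'0 : g' 0 = 0 := by simp [g', hg0]
  have hG' : Tendsto (fun ρ => ∫ t in (0 : ℝ)..ρ, g' t) atTop atTop := by
    refine hg_int.congr' ((eventually_ge_atTop 0).mono fun ρ hρ => ?_)
    refine intervalIntegral.integral_congr fun t ht => (hg'g ?_).symm
    exact (uIcc_of_le hρ ▸ ht).1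
  have hΦ x := hasFDerivAt_potential hg' hg'0 hR x
  obtain ⟨x, hx⟩ := continuous_iff_continuousAt.2 (fun x => (hΦ x).continuousAt)
    |>.exists_forall_le (tendsto_potential_cocompact hg' hG' hR)
  refine ⟨x, (innerSL_inj (𝕜 := ℝ)).1 ?_⟩
  rw [← VField_congr hg'g, map_zero]
  exact IsLocalMin.hasFDerivAt_eq_zero (.of_forall hx) (hΦ x)

theorem center_of_mass_exists_compact_support {n : ℕ} (hn : 1 ≤ n)
    (g : ℝ → ℝ) (hg_cont : ContinuousOn g (Ici 0)) (hg0 : g 0 = 0)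
    (hg_int : Tendsto (fun ρ => ∫ r in (0:ℝ)..ρ, g r) atTop atTop)
    (μ : Measure (EuclideanSpace ℝ (Fin n)))
    (hμpos : 0 < μ Set.univ) (hμfin : μ Set.univ < ⊤)
    (hμcpt : ∃ K : Set (EuclideanSpace ℝ (Fin n)), IsCompact K ∧ μ Kᶜ = 0) :
    ∃ xc : EuclideanSpace ℝ (Fin n), VField g μ xc = 0 :=
  center_of_mass_exists_compact_support_general g hg_cont hg0 hg_int μ hμpos hμfin hμcpt
end

section
/- Suppose the measure μ has compact support and g is strictly increasing on [0,∞). Then there is at most one point x_c ∈ ℝⁿ with V(x_c) = 0: if V(x₁) = 0 and V(x₂) = 0 then x₁ = x₂. -/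
open MeasureTheory Filter Set

/-!
The radial field `v y = (g ‖y‖ / ‖y‖) • y` is a strictly monotone operator:
`⟪v a - v b, a - b⟫ > 0` for `a ≠ b`, because `g` is increasing and by Cauchy–Schwarz.
As `v` is continuous and `μ` is a nonzero finite measure carried by a compact set, integrating
`y ↦ v (x₁ + y) - v (x₂ + y)` against `μ` gives `⟪V x₁ - V x₂, x₁ - x₂⟫ > 0` whenever `x₁ ≠ x₂`,
so `V` has at most one zero.
-/

open scoped RealInnerProductSpace

section Radial

variable {E : Type*} [NormedAddCommGroup E] [InnerProductSpace ℝ E] {g : ℝ → ℝ}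

lemma continuous_radial (hg : ContinuousOn g (Ici 0)) (hg0 : g 0 = 0) :
    Continuous fun y : E => (g ‖y‖ / ‖y‖) • y := by
  have hgn : Continuous fun y : E => g ‖y‖ :=
    hg.comp_continuous continuous_norm fun y => norm_nonneg y
  refine continuous_iff_continuousAt.2 fun y => ?_
  rcases eq_or_ne y 0 with rfl | hy
  · have hbound : ∀ z : E, ‖(g ‖z‖ / ‖z‖) • z‖ ≤ |g ‖z‖| := fun z => by
      rcases eq_or_ne z 0 with rfl | hz
      · simp
      · rw [norm_smul, Real.norm_eq_abs, abs_div, abs_norm,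
          div_mul_cancel₀ _ (norm_ne_zero_iff.2 hz)]
    have hlim : Tendsto (fun z : E => |g ‖z‖|) (nhds 0) (nhds 0) := by
      simpa [hg0] using (hgn.abs.tendsto (0 : E))
    simpa [ContinuousAt] using squeeze_zero_norm hbound hlim
  · exact (hgn.continuousAt.div continuous_norm.continuousAt (norm_ne_zero_iff.2 hy)).smul
      continuousAt_id

/-- Both summands are nonnegative, by monotonicity of `g` and by Cauchy–Schwarz. The junk value
`g 0 / 0 = 0` does no harm since `g 0 = 0`. -/
lemma inner_radial_sub_radial (hg0 : g 0 = 0) (a b : E) :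
    ⟪(g ‖a‖ / ‖a‖) • a - (g ‖b‖ / ‖b‖) • b, a - b⟫ =
      (g ‖a‖ - g ‖b‖) * (‖a‖ - ‖b‖) +
        (g ‖a‖ / ‖a‖ + g ‖b‖ / ‖b‖) * (‖a‖ * ‖b‖ - ⟪a, b⟫) := by
  have hcancel : ∀ r : ℝ, g r / r * r = g r := fun r => by
    rcases eq_or_ne r 0 with rfl | hr
    · simp [hg0]
    · exact div_mul_cancel₀ _ hr
  simp only [inner_sub_left, inner_sub_right, real_inner_smul_left, real_inner_self_eq_norm_sq,
    real_inner_comm a b]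
  linear_combination (‖a‖ - ‖b‖) * hcancel ‖a‖ + (‖b‖ - ‖a‖) * hcancel ‖b‖

lemma inner_radial_sub_radial_pos (hg0 : g 0 = 0) (hg : StrictMonoOn g (Ici 0))
    {a b : E} (hab : a ≠ b) :
    0 < ⟪(g ‖a‖ / ‖a‖) • a - (g ‖b‖ / ‖b‖) • b, a - b⟫ := by
  have hg_pos : ∀ r : ℝ, 0 < r → 0 < g r := fun r hr => hg0 ▸ hg self_mem_Ici hr.le hr
  have hphi_nonneg : ∀ y : E, 0 ≤ g ‖y‖ / ‖y‖ := fun y => by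
    rcases (norm_nonneg y).eq_or_lt with h | h
    · simp [← h]
    · exact (div_pos (hg_pos _ h) h).le
  have hcs : 0 ≤ ‖a‖ * ‖b‖ - ⟪a, b⟫ := sub_nonneg.2 (real_inner_le_norm a b)
  rw [inner_radial_sub_radial hg0]
  rcases ne_or_eq ‖a‖ ‖b‖ with hne | heq
  · have : 0 < (g ‖a‖ - g ‖b‖) * (‖a‖ - ‖b‖) := by
      rcases hne.lt_or_gt with h | h
      · exact mul_pos_of_neg_of_neg (sub_neg.2 (hg (norm_nonneg _) (norm_nonneg _) h))
          (sub_neg.2 h)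
      · exact mul_pos (sub_pos.2 (hg (norm_nonneg _) (norm_nonneg _) h)) (sub_pos.2 h)
    nlinarith [mul_nonneg (add_nonneg (hphi_nonneg a) (hphi_nonneg b)) hcs]
  · -- with equal norms, `‖a‖ * ‖b‖ - ⟪a, b⟫ = ‖a - b‖ ^ 2 / 2`
    have ha : 0 < ‖a‖ := by
      by_contra! h
      have h0 : ‖a‖ = 0 := le_antisymm h (norm_nonneg a)
      exact hab (by rw [norm_eq_zero.1 h0, norm_eq_zero.1 (heq.symm.trans h0)])
    have hgap : 0 < ‖a‖ * ‖a‖ - ⟪a, b⟫ := by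
      have hsq := norm_sub_sq_real a b
      have hpos := sq_pos_of_pos (norm_pos_iff.2 (sub_ne_zero.2 hab))
      rw [← heq] at hsq
      nlinarith
    have hphi : 0 < g ‖a‖ / ‖a‖ := div_pos (hg_pos _ ha) ha
    rw [← heq, sub_self, zero_mul, zero_add]
    exact mul_pos (add_pos hphi hphi) hgap

end Radial

lemma Continuous.integrable_of_measure_compl_eq_zero {X E : Type*} [TopologicalSpace X]
    [T2Space X] [MeasurableSpace X] [OpensMeasurableSpace X] [NormedAddCommGroup E]
    {μ : Measure X} [IsFiniteMeasureOnCompacts μ] {f : X → E} (hf : Continuous f)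
    {K : Set X} (hK : IsCompact K) (hKc : μ Kᶜ = 0) : Integrable f μ := by
  have hμK : μ.restrict K = μ := Measure.restrict_eq_self_of_ae_mem (ae_iff.2 hKc)
  simpa [IntegrableOn, hμK] using hf.continuousOn.integrableOn_compact (μ := μ) hK

lemma inner_integral_pos {α E : Type*} [MeasurableSpace α] {μ : Measure α} [NeZero μ]
    [NormedAddCommGroup E] [InnerProductSpace ℝ E] [CompleteSpace E] {F : α → E}
    (hF : Integrable F μ) {c : E} (hpos : ∀ y, 0 < ⟪F y, c⟫) : 0 < ⟪∫ y, F y ∂μ, c⟫ := by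
  have hsupp : Function.support (fun y => ⟪c, F y⟫) = univ :=
    eq_univ_of_forall fun y => (real_inner_comm c (F y) ▸ hpos y).ne'
  rw [real_inner_comm, ← integral_inner hF, integral_pos_iff_support_of_nonneg
    (fun y => (real_inner_comm c (F y) ▸ hpos y).le) (hF.const_inner c), hsupp]
  exact Measure.measure_univ_pos.2 (NeZero.ne μ)

lemma inner_VField_sub_VField_pos {n : ℕ} {g : ℝ → ℝ} (hg_cont : ContinuousOn g (Ici 0))
    (hg0 : g 0 = 0) (hg_mono : StrictMonoOn g (Ici 0)) {μ : Measure (EuclideanSpace ℝ (Fin n))}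
    [IsFiniteMeasure μ] [NeZero μ] {K : Set (EuclideanSpace ℝ (Fin n))} (hK : IsCompact K)
    (hKc : μ Kᶜ = 0) {x₁ x₂ : EuclideanSpace ℝ (Fin n)} (hx : x₁ ≠ x₂) :
    0 < ⟪VField g μ x₁ - VField g μ x₂, x₁ - x₂⟫ := by
  have hint : ∀ x, Integrable (fun y => radialField g (x + y)) μ := fun x =>
    ((continuous_radial hg_cont hg0).comp
      (continuous_const_add x)).integrable_of_measure_compl_eq_zero hK hKc
  rw [VField, VField, ← integral_sub (hint x₁) (hint x₂)]
  refine inner_integral_pos ((hint x₁).sub (hint x₂)) fun y => ?_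
  have hy : x₁ + y ≠ x₂ + y := by simpa using hx
  have hpos := inner_radial_sub_radial_pos hg0 hg_mono hy
  rwa [add_sub_add_right_eq_sub] at hpos

theorem center_of_mass_unique_strictMono_general {n : ℕ}
    (g : ℝ → ℝ) (hg_cont : ContinuousOn g (Ici 0)) (hg0 : g 0 = 0)
    (hg_mono : StrictMonoOn g (Ici 0))
    (μ : Measure (EuclideanSpace ℝ (Fin n)))
    (hμpos : 0 < μ Set.univ) (hμfin : μ Set.univ < ⊤)
    (hμcpt : ∃ K : Set (EuclideanSpace ℝ (Fin n)), IsCompact K ∧ μ Kᶜ = 0) :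
    ∀ x₁ x₂ : EuclideanSpace ℝ (Fin n),
      VField g μ x₁ = 0 → VField g μ x₂ = 0 → x₁ = x₂ := by
  intro x₁ x₂ h₁ h₂
  by_contra hx
  have : IsFiniteMeasure μ := ⟨hμfin⟩
  have : NeZero μ := ⟨Measure.measure_univ_pos.1 hμpos⟩
  obtain ⟨K, hK, hKc⟩ := hμcpt
  have hpos := inner_VField_sub_VField_pos hg_cont hg0 hg_mono hK hKc hx
  simp [h₁, h₂] at hpos

theorem center_of_mass_unique_strictMono {n : ℕ} (hn : 1 ≤ n)
    (g : ℝ → ℝ) (hg_cont : ContinuousOn g (Ici 0)) (hg0 : g 0 = 0)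
    (hg_mono : StrictMonoOn g (Ici 0))
    (μ : Measure (EuclideanSpace ℝ (Fin n)))
    (hμpos : 0 < μ Set.univ) (hμfin : μ Set.univ < ⊤)
    (hμcpt : ∃ K : Set (EuclideanSpace ℝ (Fin n)), IsCompact K ∧ μ Kᶜ = 0) :
    ∀ x₁ x₂ : EuclideanSpace ℝ (Fin n),
      VField g μ x₁ = 0 → VField g μ x₂ = 0 → x₁ = x₂ :=
  center_of_mass_unique_strictMono_general g hg_cont hg0 hg_mono μ hμpos hμfin hμcpt
end

section
/- Suppose the measure μ has compact support, g is increasing (nondecreasing) with g(r) > 0 for all r > 0, and μ is not supported in any line (i.e., μ(ℝⁿ \ L) > 0 for every affine line L in ℝⁿ). Then there is at most one point x_c ∈ ℝⁿ with V(x_c) = 0. -/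
/-!
For the radial field `v`, the monotonicity defect `⟪v a - v b, a - b⟫` equals
`(g‖a‖ - g‖b‖)(‖a‖ - ‖b‖)` plus a nonnegative multiple of the Cauchy–Schwarz defect
`‖a‖‖b‖ - ⟪a, b⟫`; the first term is nonnegative as `g` is monotone, and the second is positive
unless `b` is a multiple of `a - b`. Taking `a = x₁ + y`, `b = x₂ + y` and integrating against `μ`,
`⟪V x₁ - V x₂, x₁ - x₂⟫ > 0` for `x₁ ≠ x₂`, because `μ` charges the complement of the line
`-x₂ + ℝ (x₁ - x₂)`. So `V` is strictly monotone and vanishes at most once.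
-/

open MeasureTheory Filter Set

open scoped RealInnerProductSpace

theorem Continuous.integrable_of_measure_compl_compact_eq_zero
    {X E : Type*} [TopologicalSpace X] [T2Space X] [MeasurableSpace X] [OpensMeasurableSpace X]
    [NormedAddCommGroup E] {μ : Measure X} [IsFiniteMeasureOnCompacts μ] {f : X → E}
    (hf : Continuous f) {K : Set X} (hK : IsCompact K) (hK0 : μ Kᶜ = 0) :
    Integrable f μ := by
  rw [← Measure.restrict_eq_self_of_ae_mem (ae_iff.2 hK0)]
  exact hf.continuousOn.integrableOn_compact hK

theorem exists_eq_smul_sub_of_inner_eq_norm_mul {E : Type*} [NormedAddCommGroup E]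
    [InnerProductSpace ℝ E] {a b : E} (hab : a ≠ b) (h : ⟪a, b⟫ = ‖a‖ * ‖b‖) :
    ∃ t : ℝ, b = t • (a - b) := by
  have hsmul : ‖b‖ • (a - b) = (‖a‖ - ‖b‖) • b := by
    rw [smul_sub, sub_smul, inner_eq_norm_mul_iff_real.1 h]
  rcases eq_or_ne ‖a‖ ‖b‖ with hnorm | hnorm
  · rw [hnorm, sub_self, zero_smul, smul_eq_zero, sub_eq_zero] at hsmul
    exact ⟨0, by simpa [norm_eq_zero, hab] using hsmul⟩
  · refine ⟨‖b‖ / (‖a‖ - ‖b‖), ?_⟩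
    rw [div_eq_inv_mul, mul_smul, hsmul, inv_smul_smul₀ (sub_ne_zero.2 hnorm)]

theorem MonotoneOn.sub_mul_sub_nonneg {s : Set ℝ} {f : ℝ → ℝ} (hf : MonotoneOn f s) {a b : ℝ}
    (ha : a ∈ s) (hb : b ∈ s) : 0 ≤ (f a - f b) * (a - b) := by
  rcases le_total a b with hab | hab
  · exact mul_nonneg_of_nonpos_of_nonpos (sub_nonpos.2 (hf ha hb hab)) (sub_nonpos.2 hab)
  · exact mul_nonneg (sub_nonneg.2 (hf hb ha hab)) (sub_nonneg.2 hab)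

theorem MonotoneOn.div_nonneg_of_map_zero {g : ℝ → ℝ} (hg : MonotoneOn g (Ici 0))
    (hg0 : g 0 = 0) {r : ℝ} (hr : 0 ≤ r) : 0 ≤ g r / r :=
  div_nonneg (hg0 ▸ hg self_mem_Ici hr hr) hr

namespace radialField

variable {n : ℕ} {g : ℝ → ℝ}

theorem map_zero : radialField (n := n) g 0 = 0 := by
  simp [radialField]

theorem norm_eq_abs (hg0 : g 0 = 0) (y : EuclideanSpace ℝ (Fin n)) :
    ‖radialField g y‖ = |g ‖y‖| := by
  rcases eq_or_ne y 0 with rfl | hy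
  · simp [radialField, hg0]
  · rw [radialField, norm_smul, Real.norm_eq_abs, abs_div, abs_norm,
      div_mul_cancel₀ _ (norm_ne_zero_iff.2 hy)]

theorem continuous (hg_cont : ContinuousOn g (Ici 0)) (hg0 : g 0 = 0) :
    Continuous (radialField (n := n) g) := by
  have hgn : Continuous fun y : EuclideanSpace ℝ (Fin n) => g ‖y‖ :=
    hg_cont.comp_continuous continuous_norm fun y => norm_nonneg y
  refine continuous_iff_continuousAt.2 fun y => ?_
  rcases eq_or_ne y 0 with rfl | hy
  · rw [ContinuousAt, map_zero, tendsto_zero_iff_norm_tendsto_zero]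
    simp_rw [norm_eq_abs hg0]
    simpa [hg0] using (hgn.tendsto 0).abs
  · exact (hgn.continuousAt.div continuous_norm.continuousAt (norm_ne_zero_iff.2 hy)).smul
      continuousAt_id

theorem inner_sub_sub_eq (hg0 : g 0 = 0) (a b : EuclideanSpace ℝ (Fin n)) :
    ⟪radialField g a - radialField g b, a - b⟫ =
      (g ‖a‖ - g ‖b‖) * (‖a‖ - ‖b‖) + (g ‖a‖ / ‖a‖ + g ‖b‖ / ‖b‖) * (‖a‖ * ‖b‖ - ⟪a, b⟫) := by
  have hmul : ∀ r : ℝ, 0 ≤ r → g r / r * r = g r := fun r hr => by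
    rcases hr.eq_or_lt with rfl | hr
    · simp [hg0]
    · exact div_mul_cancel₀ _ hr.ne'
  simp only [radialField, inner_sub_left, inner_sub_right, real_inner_smul_left,
    real_inner_self_eq_norm_sq, real_inner_comm b a]
  linear_combination (‖a‖ - ‖b‖) * (hmul ‖a‖ (norm_nonneg a) - hmul ‖b‖ (norm_nonneg b))

theorem inner_sub_sub_nonneg (hg0 : g 0 = 0) (hg_mono : MonotoneOn g (Ici 0))
    (a b : EuclideanSpace ℝ (Fin n)) : 0 ≤ ⟪radialField g a - radialField g b, a - b⟫ := by
  rw [inner_sub_sub_eq hg0]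
  exact add_nonneg (hg_mono.sub_mul_sub_nonneg (norm_nonneg a) (norm_nonneg b))
    (mul_nonneg (add_nonneg (hg_mono.div_nonneg_of_map_zero hg0 (norm_nonneg a))
      (hg_mono.div_nonneg_of_map_zero hg0 (norm_nonneg b)))
      (sub_nonneg.2 (real_inner_le_norm a b)))

theorem inner_sub_sub_pos (hg0 : g 0 = 0) (hg_mono : MonotoneOn g (Ici 0))
    (hg_pos : ∀ r : ℝ, 0 < r → 0 < g r) {a b : EuclideanSpace ℝ (Fin n)}
    (hab : a ≠ b) (hb : ∀ t : ℝ, b ≠ t • (a - b)) :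
    0 < ⟪radialField g a - radialField g b, a - b⟫ := by
  have ha : a ≠ 0 := by
    rintro rfl
    exact hb (-1) (by simp)
  have hcs : ⟪a, b⟫ < ‖a‖ * ‖b‖ := (real_inner_le_norm a b).lt_of_ne
    fun h => (exists_eq_smul_sub_of_inner_eq_norm_mul hab h).elim hb
  have hA : 0 < ‖a‖ := norm_pos_iff.2 ha
  rw [inner_sub_sub_eq hg0]
  exact add_pos_of_nonneg_of_pos (hg_mono.sub_mul_sub_nonneg (norm_nonneg a) (norm_nonneg b))
    (mul_pos (add_pos_of_pos_of_nonneg (div_pos (hg_pos _ hA) hA)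
      (hg_mono.div_nonneg_of_map_zero hg0 (norm_nonneg b))) (sub_pos.2 hcs))

end radialField

namespace VField

variable {n : ℕ} {g : ℝ → ℝ} {μ : Measure (EuclideanSpace ℝ (Fin n))}

theorem integrable_radialField_add (hg_cont : ContinuousOn g (Ici 0)) (hg0 : g 0 = 0)
    [IsFiniteMeasure μ] {K : Set (EuclideanSpace ℝ (Fin n))} (hK : IsCompact K)
    (hK0 : μ Kᶜ = 0) (x : EuclideanSpace ℝ (Fin n)) :
    Integrable (fun y => radialField g (x + y)) μ :=
  ((radialField.continuous hg_cont hg0).comp (continuous_const_add x))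
    |>.integrable_of_measure_compl_compact_eq_zero hK hK0

theorem inner_sub_sub_eq_integral
    (hint : ∀ x, Integrable (fun y => radialField g (x + y)) μ) (x₁ x₂ : EuclideanSpace ℝ (Fin n)) :
    ⟪VField g μ x₁ - VField g μ x₂, x₁ - x₂⟫ =
      ∫ y, ⟪radialField g (x₁ + y) - radialField g (x₂ + y), x₁ - x₂⟫ ∂μ := by
  simp_rw [real_inner_comm (x₁ - x₂)]
  rw [VField, VField, ← integral_sub (hint x₁) (hint x₂)]
  exact (integral_inner ((hint x₁).sub (hint x₂)) _).symm

theorem inner_sub_sub_pos (hg0 : g 0 = 0) (hg_mono : MonotoneOn g (Ici 0))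
    (hg_pos : ∀ r : ℝ, 0 < r → 0 < g r)
    (hint : ∀ x, Integrable (fun y => radialField g (x + y)) μ)
    (hμline : ∀ a b : EuclideanSpace ℝ (Fin n), b ≠ 0 →
      0 < μ ({y | ∃ t : ℝ, y = a + t • b}ᶜ))
    {x₁ x₂ : EuclideanSpace ℝ (Fin n)} (hne : x₁ ≠ x₂) :
    0 < ⟪VField g μ x₁ - VField g μ x₂, x₁ - x₂⟫ := by
  have hnonneg (y : EuclideanSpace ℝ (Fin n)) :
      0 ≤ ⟪radialField g (x₁ + y) - radialField g (x₂ + y), x₁ - x₂⟫ := by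
    simpa using radialField.inner_sub_sub_nonneg hg0 hg_mono (x₁ + y) (x₂ + y)
  rw [inner_sub_sub_eq_integral hint, integral_pos_iff_support_of_nonneg hnonneg
    (((hint x₁).sub (hint x₂)).inner_const _)]
  refine (hμline (-x₂) (x₁ - x₂) (sub_ne_zero.2 hne)).trans_le (measure_mono fun y hy => ?_)
  have hoff : ∀ t : ℝ, x₂ + y ≠ t • (x₁ + y - (x₂ + y)) := fun t ht =>
    hy ⟨t, by rw [← add_sub_add_right_eq_sub x₁ x₂ y, ← ht]; abel⟩
  simpa using (radialField.inner_sub_sub_pos hg0 hg_mono hg_pos (by simpa using hne) hoff).ne'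

end VField

theorem center_of_mass_unique_monotone_not_in_line_general {n : ℕ}
    (g : ℝ → ℝ) (hg_cont : ContinuousOn g (Ici 0)) (hg0 : g 0 = 0)
    (hg_mono : MonotoneOn g (Ici 0)) (hg_pos : ∀ r : ℝ, 0 < r → 0 < g r)
    (μ : Measure (EuclideanSpace ℝ (Fin n)))
    (hμfin : μ Set.univ < ⊤)
    (hμcpt : ∃ K : Set (EuclideanSpace ℝ (Fin n)), IsCompact K ∧ μ Kᶜ = 0)
    (hμline : ∀ a b : EuclideanSpace ℝ (Fin n), b ≠ 0 →
      0 < μ ({y | ∃ t : ℝ, y = a + t • b}ᶜ)) :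
    ∀ x₁ x₂ : EuclideanSpace ℝ (Fin n),
      VField g μ x₁ = 0 → VField g μ x₂ = 0 → x₁ = x₂ := by
  intro x₁ x₂ h₁ h₂
  by_contra hne
  have : IsFiniteMeasure μ := ⟨hμfin⟩
  obtain ⟨K, hK, hK0⟩ := hμcpt
  have hpos := VField.inner_sub_sub_pos hg0 hg_mono hg_pos
    (VField.integrable_radialField_add hg_cont hg0 hK hK0) hμline hne
  simp [h₁, h₂] at hpos

theorem center_of_mass_unique_monotone_not_in_line {n : ℕ} (hn : 1 ≤ n)
    (g : ℝ → ℝ) (hg_cont : ContinuousOn g (Ici 0)) (hg0 : g 0 = 0)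
    (hg_mono : MonotoneOn g (Ici 0)) (hg_pos : ∀ r : ℝ, 0 < r → 0 < g r)
    (μ : Measure (EuclideanSpace ℝ (Fin n)))
    (hμpos : 0 < μ Set.univ) (hμfin : μ Set.univ < ⊤)
    (hμcpt : ∃ K : Set (EuclideanSpace ℝ (Fin n)), IsCompact K ∧ μ Kᶜ = 0)
    (hμline : ∀ a b : EuclideanSpace ℝ (Fin n), b ≠ 0 →
      0 < μ ({y | ∃ t : ℝ, y = a + t • b}ᶜ)) :
    ∀ x₁ x₂ : EuclideanSpace ℝ (Fin n),
      VField g μ x₁ = 0 → VField g μ x₂ = 0 → x₁ = x₂ :=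
  center_of_mass_unique_monotone_not_in_line_general g hg_cont hg0 hg_mono hg_pos μ hμfin hμcpt
    hμline
end

section
/- Suppose g is increasing (nondecreasing) and bounded on [0,∞) with g(r) > 0 for all r > 0, and the Borel measure μ on ℝⁿ with 0 < μ(ℝⁿ) < ∞ is not supported in any line (i.e., μ(ℝⁿ \ L) > 0 for every affine line L in ℝⁿ). Then there is at most one point x_c ∈ ℝⁿ with V(x_c) = 0. -/
/-!
The field `v` is monotone: `⟪a - b, v a - v b⟫` splits as
`(g ‖a‖ - g ‖b‖) (‖a‖ - ‖b‖) + (g ‖a‖ / ‖a‖ + g ‖b‖ / ‖b‖) (‖a‖ ‖b‖ - ⟪a, b⟫)`, a sum of two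
nonnegative terms, and the second is positive as soon as `0`, `a`, `b` are not collinear.
Integrating against `μ` shows `⟪x₁ - x₂, V x₁ - V x₂⟫ > 0` for `x₁ ≠ x₂`, since `μ` charges the
set of `y` with `0`, `x₁ + y`, `x₂ + y` not collinear, the complement of a line; hence `V` has at
most one zero.
-/

open MeasureTheory Filter Set Topology

open RealInnerProductSpace

section RadialField

variable {n : ℕ} {g : ℝ → ℝ}

lemma apply_norm_div_norm_mul_norm (hg0 : g 0 = 0) (a : EuclideanSpace ℝ (Fin n)) :
    g ‖a‖ / ‖a‖ * ‖a‖ = g ‖a‖ :=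
  div_mul_cancel_of_imp fun h => by rw [h, hg0]

lemma norm_radialField (hg0 : g 0 = 0) (a : EuclideanSpace ℝ (Fin n)) :
    ‖radialField g a‖ = |g ‖a‖| := by
  rw [radialField, norm_smul, Real.norm_eq_abs, ← abs_norm a, ← abs_mul, abs_norm,
    apply_norm_div_norm_mul_norm hg0]

lemma measurable_radialField (hg_cont : ContinuousOn g (Ici 0)) :
    Measurable (radialField (n := n) g) :=
  ((hg_cont.comp_continuous continuous_norm norm_nonneg).measurable.div measurable_norm).smul
    measurable_id

lemma inner_sub_radialField_sub (hg0 : g 0 = 0) (a b : EuclideanSpace ℝ (Fin n)) :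
    ⟪a - b, radialField g a - radialField g b⟫ =
      (g ‖a‖ - g ‖b‖) * (‖a‖ - ‖b‖) +
      (g ‖a‖ / ‖a‖ + g ‖b‖ / ‖b‖) * (‖a‖ * ‖b‖ - ⟪a, b⟫) := by
  have expand : ⟪a - b, radialField g a - radialField g b⟫ =
      g ‖a‖ / ‖a‖ * ‖a‖ ^ 2 + g ‖b‖ / ‖b‖ * ‖b‖ ^ 2
        - (g ‖a‖ / ‖a‖ + g ‖b‖ / ‖b‖) * ⟪a, b⟫ := by
    simp only [radialField, inner_sub_left, inner_sub_right, real_inner_smul_right,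
      real_inner_self_eq_norm_sq, real_inner_comm b a]
    ring
  rw [expand]
  linear_combination (‖a‖ - ‖b‖) * apply_norm_div_norm_mul_norm hg0 a +
    (‖b‖ - ‖a‖) * apply_norm_div_norm_mul_norm hg0 b

lemma inner_lt_norm_mul_norm_of_forall_ne_smul_sub {a b : EuclideanSpace ℝ (Fin n)} (hab : a ≠ b)
    (hline : ∀ t : ℝ, a ≠ t • (a - b)) : ⟪a, b⟫ < ‖a‖ * ‖b‖ := by
  rw [inner_lt_norm_mul_iff_real]
  intro hEq
  have hsmul : (‖a‖ - ‖b‖) • a = ‖a‖ • (a - b) := by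
    rw [sub_smul, hEq, smul_sub]
  rcases eq_or_ne ‖a‖ ‖b‖ with hnorm | hnorm
  · have ha : ‖a‖ ≠ 0 := fun h => hline 0 (by rw [zero_smul, ← norm_eq_zero, h])
    rw [hnorm, sub_self, zero_smul, eq_comm, smul_eq_zero] at hsmul
    exact hab (sub_eq_zero.mp (hsmul.resolve_left (hnorm ▸ ha)))
  · refine hline (‖a‖ / (‖a‖ - ‖b‖)) ?_
    rw [div_eq_inv_mul, mul_smul, ← hsmul, inv_smul_smul₀ (sub_ne_zero.mpr hnorm)]

variable (hg_mono : MonotoneOn g (Ici 0))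
include hg_mono

lemma sub_mul_sub_norm_nonneg (a b : EuclideanSpace ℝ (Fin n)) :
    0 ≤ (g ‖a‖ - g ‖b‖) * (‖a‖ - ‖b‖) :=
  (hg_mono.monovaryOn monotoneOn_id).sub_mul_sub_nonneg (norm_nonneg b) (norm_nonneg a)

lemma apply_norm_div_norm_nonneg (hg0 : g 0 = 0) (a : EuclideanSpace ℝ (Fin n)) : 0 ≤ g ‖a‖ / ‖a‖ :=
  div_nonneg (hg0 ▸ hg_mono self_mem_Ici (norm_nonneg a) (norm_nonneg a)) (norm_nonneg a)

lemma inner_sub_radialField_sub_nonneg (hg0 : g 0 = 0) (a b : EuclideanSpace ℝ (Fin n)) :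
    0 ≤ ⟪a - b, radialField g a - radialField g b⟫ := by
  rw [inner_sub_radialField_sub hg0]
  exact add_nonneg (sub_mul_sub_norm_nonneg hg_mono a b) <| mul_nonneg
    (add_nonneg (apply_norm_div_norm_nonneg hg_mono hg0 a)
      (apply_norm_div_norm_nonneg hg_mono hg0 b))
    (sub_nonneg.mpr (real_inner_le_norm a b))

lemma inner_sub_radialField_sub_pos (hg0 : g 0 = 0) (hg_pos : ∀ r : ℝ, 0 < r → 0 < g r)
    {a b : EuclideanSpace ℝ (Fin n)} (hab : a ≠ b) (hline : ∀ t : ℝ, a ≠ t • (a - b)) :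
    0 < ⟪a - b, radialField g a - radialField g b⟫ := by
  have hna : 0 < ‖a‖ := norm_pos_iff.mpr fun h => hline 0 (by rw [zero_smul, h])
  rw [inner_sub_radialField_sub hg0]
  refine add_pos_of_nonneg_of_pos (sub_mul_sub_norm_nonneg hg_mono a b) (mul_pos ?_ ?_)
  · exact add_pos_of_pos_of_nonneg (div_pos (hg_pos _ hna) hna)
      (apply_norm_div_norm_nonneg hg_mono hg0 b)
  · exact sub_pos.mpr (inner_lt_norm_mul_norm_of_forall_ne_smul_sub hab hline)

end RadialField

section VField

variable {n : ℕ} {g : ℝ → ℝ} {C : ℝ} {μ : Measure (EuclideanSpace ℝ (Fin n))}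
  [IsFiniteMeasure μ]

lemma integrable_radialField_const_add (hg_cont : ContinuousOn g (Ici 0)) (hg0 : g 0 = 0)
    (hC : ∀ r : ℝ, 0 ≤ r → |g r| ≤ C) (x : EuclideanSpace ℝ (Fin n)) :
    Integrable (fun y => radialField g (x + y)) μ :=
  (integrable_const C).mono'
    ((measurable_radialField hg_cont).comp (measurable_const_add x)).aestronglyMeasurable
    (ae_of_all _ fun y => (norm_radialField hg0 (x + y)).trans_le (hC _ (norm_nonneg _)))

theorem inner_sub_VField_sub_pos (hg_cont : ContinuousOn g (Ici 0)) (hg0 : g 0 = 0)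
    (hg_mono : MonotoneOn g (Ici 0)) (hC : ∀ r : ℝ, 0 ≤ r → |g r| ≤ C)
    (hg_pos : ∀ r : ℝ, 0 < r → 0 < g r) {x₁ x₂ : EuclideanSpace ℝ (Fin n)} (hne : x₁ ≠ x₂)
    (hμ : 0 < μ {y | ∃ t : ℝ, y = -x₁ + t • (x₁ - x₂)}ᶜ) :
    0 < ⟪x₁ - x₂, VField g μ x₁ - VField g μ x₂⟫ := by
  have hint := integrable_radialField_const_add (μ := μ) hg_cont hg0 hC
  have hdiff : Integrable (fun y => radialField g (x₁ + y) - radialField g (x₂ + y)) μ :=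
    (hint x₁).sub (hint x₂)
  rw [VField, VField, ← integral_sub (hint x₁) (hint x₂), ← integral_inner hdiff,
    integral_pos_iff_support_of_nonneg]
  · refine hμ.trans_le (measure_mono fun y hy => ?_)
    have hline : ∀ t : ℝ, x₁ + y ≠ t • (x₁ - x₂) :=
      fun t h => hy ⟨t, by rw [← h, neg_add_cancel_left]⟩
    have hpos := inner_sub_radialField_sub_pos hg_mono hg0 hg_pos
      (fun h => hne (add_right_cancel h)) (by simpa only [add_sub_add_right_eq_sub] using hline)
    rw [add_sub_add_right_eq_sub] at hpos
    exact hpos.ne'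
  · intro y
    have hnonneg := inner_sub_radialField_sub_nonneg hg_mono hg0 (x₁ + y) (x₂ + y)
    rwa [add_sub_add_right_eq_sub] at hnonneg
  · exact hdiff.const_inner _

end VField

theorem center_of_mass_unique_monotone_bounded_not_in_line_general {n : ℕ}
    (g : ℝ → ℝ) (hg_cont : ContinuousOn g (Ici 0)) (hg0 : g 0 = 0)
    (hg_mono : MonotoneOn g (Ici 0))
    (hg_bdd : ∃ C : ℝ, ∀ r : ℝ, 0 ≤ r → |g r| ≤ C)
    (hg_pos : ∀ r : ℝ, 0 < r → 0 < g r)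
    (μ : Measure (EuclideanSpace ℝ (Fin n)))
    (hμfin : μ Set.univ < ⊤)
    (hμline : ∀ a b : EuclideanSpace ℝ (Fin n), b ≠ 0 →
      0 < μ ({y | ∃ t : ℝ, y = a + t • b}ᶜ)) :
    ∀ x₁ x₂ : EuclideanSpace ℝ (Fin n),
      VField g μ x₁ = 0 → VField g μ x₂ = 0 → x₁ = x₂ := by
  intro x₁ x₂ h₁ h₂
  by_contra hne
  obtain ⟨C, hC⟩ := hg_bdd
  have : IsFiniteMeasure μ := ⟨hμfin⟩
  have hpos := inner_sub_VField_sub_pos hg_cont hg0 hg_mono hC hg_pos hne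
    (hμline (-x₁) (x₁ - x₂) (sub_ne_zero.mpr hne))
  rw [h₁, h₂, sub_zero, inner_zero_right] at hpos
  exact hpos.false

theorem center_of_mass_unique_monotone_bounded_not_in_line {n : ℕ} (hn : 1 ≤ n)
    (g : ℝ → ℝ) (hg_cont : ContinuousOn g (Ici 0)) (hg0 : g 0 = 0)
    (hg_mono : MonotoneOn g (Ici 0))
    (hg_bdd : ∃ C : ℝ, ∀ r : ℝ, 0 ≤ r → |g r| ≤ C)
    (hg_pos : ∀ r : ℝ, 0 < r → 0 < g r)
    (μ : Measure (EuclideanSpace ℝ (Fin n)))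
    (hμpos : 0 < μ Set.univ) (hμfin : μ Set.univ < ⊤)
    (hμline : ∀ a b : EuclideanSpace ℝ (Fin n), b ≠ 0 →
      0 < μ ({y | ∃ t : ℝ, y = a + t • b}ᶜ)) :
    ∀ x₁ x₂ : EuclideanSpace ℝ (Fin n),
      VField g μ x₁ = 0 → VField g μ x₂ = 0 → x₁ = x₂ :=
  center_of_mass_unique_monotone_bounded_not_in_line_general g hg_cont hg0 hg_mono hg_bdd hg_pos μ
    hμfin hμline
end

section
/- Suppose μ is a finite signed Borel measure on ℝⁿ with 0 < μ(ℝⁿ) ≤ |μ|(ℝⁿ) < ∞, where |μ| is the total variation measure. If g has a positive and finite limit at infinity, g(∞) := lim_{r→∞} g(r) with 0 < g(∞) < ∞, then there exists a point x_c ∈ ℝⁿ with V(x_c) = 0. -/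
open MeasureTheory Filter Set Topology

/-- The vector field `V(x) = ∫ v(x+y) dμ(y)` for a finite signed measure `μ`,
defined via the Jordan decomposition `μ = μ⁺ - μ⁻`. -/
noncomputable def VFieldSigned {n : ℕ} (g : ℝ → ℝ)
    (μ : SignedMeasure (EuclideanSpace ℝ (Fin n)))
    (x : EuclideanSpace ℝ (Fin n)) : EuclideanSpace ℝ (Fin n) :=
  (∫ y, radialField g (x + y) ∂μ.toJordanDecomposition.posPart) -
    (∫ y, radialField g (x + y) ∂μ.toJordanDecomposition.negPart)

/-!
`V` is the gradient of the potential `Φ(x) = ∫ (G(|x+y|) - G(|y|)) dμ(y)`, where `G' = g`.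
Since `G(r)/r → g(∞)`, dominated convergence gives `Φ(x)/|x| → g(∞) μ(ℝⁿ) > 0`, so `Φ` is
coercive and attains its minimum, where `V = ∇Φ` vanishes.
-/

open Asymptotics Bornology

lemma Continuous.exists_abs_le_of_even_of_tendsto {f : ℝ → ℝ} {L : ℝ} (hf : Continuous f)
    (heven : Function.Even f) (hlim : Tendsto f atTop (𝓝 L)) : ∃ M, ∀ r, |f r| ≤ M := by
  simpa using isBounded_iff_forall_norm_le.1
    ((hf.isBounded_range_iff_isBigO_atTop_of_even heven).2 (hlim.isBigO_one ℝ))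

section Primitive

variable {G g : ℝ → ℝ}

lemma abs_sub_le_of_hasDerivAt_of_abs_le {M : ℝ} (hG : ∀ r, HasDerivAt G (g r) r)
    (hM : ∀ r, |g r| ≤ M) (a b : ℝ) : |G a - G b| ≤ M * |a - b| :=
  convex_univ.norm_image_sub_le_of_norm_hasDerivWithin_le (fun r _ => (hG r).hasDerivWithinAt)
    (fun r _ => hM r) trivial trivial

lemma tendsto_div_self_atTop_of_hasDerivAt {L : ℝ} (hG : ∀ r, HasDerivAt G (g r) r)
    (hlim : Tendsto g atTop (𝓝 L)) : Tendsto (fun r => G r / r) atTop (𝓝 L) := by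
  rw [Metric.tendsto_atTop]
  intro ε hε
  obtain ⟨R, hR⟩ := eventually_atTop.1 ((eventually_ge_atTop 0).and
    (hlim.eventually (Metric.closedBall_mem_nhds L (half_pos hε))))
  have hR0 : 0 ≤ R := (hR R le_rfl).1
  have hlip : ∀ r ≥ R, |(G r - L * r) - (G R - L * R)| ≤ ε / 2 * |r - R| := fun r hr =>
    (convex_Ici R).norm_image_sub_le_of_norm_hasDerivWithin_le
      (fun t _ => ((hG t).sub ((hasDerivAt_id t).const_mul L)).hasDerivWithinAt)
      (fun t ht => by simpa [Real.dist_eq] using (hR t ht).2) self_mem_Ici hr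
  set C := |G R - L * R|
  refine ⟨R + 2 * C / ε + 1, fun r hr => ?_⟩
  have hCε : 0 ≤ 2 * C / ε := by positivity
  have hrR : R ≤ r := by linarith
  have hr0 : 0 < r := by linarith
  have hCr : 2 * C < ε * r :=
    calc 2 * C = ε * (2 * C / ε) := by field_simp
      _ < ε * r := by gcongr; linarith
  have hGr := hlip r hrR
  rw [abs_of_nonneg (sub_nonneg.2 hrR)] at hGr
  rw [Real.dist_eq, div_sub' hr0.ne', abs_div, abs_of_pos hr0, div_lt_iff₀ hr0, mul_comm r L]
  linarith [abs_sub_abs_le_abs_sub (G r - L * r) (G R - L * R), mul_nonneg hε.le hR0]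

end Primitive

section NormedGroup

variable {E : Type*} [NormedAddCommGroup E] {G g : ℝ → ℝ} {M : ℝ}

lemma tendsto_cobounded_atTop_of_tendsto_div_norm {f : E → ℝ} {c : ℝ} (hc : 0 < c)
    (h : Tendsto (fun x => f x / ‖x‖) (cobounded E) (𝓝 c)) : Tendsto f (cobounded E) atTop := by
  refine (h.pos_mul_atTop hc tendsto_norm_cobounded_atTop).congr' ?_
  filter_upwards [eventually_cobounded_le_norm 1] with x hx
  exact div_mul_cancel₀ _ (by positivity)

lemma abs_sub_comp_norm_le (hG : ∀ r, HasDerivAt G (g r) r) (hM : ∀ r, |g r| ≤ M) (x y : E) :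
    |G ‖x + y‖ - G ‖y‖| ≤ M * ‖x‖ :=
  (abs_sub_le_of_hasDerivAt_of_abs_le hG hM _ _).trans <|
    mul_le_mul_of_nonneg_left (by simpa using abs_norm_sub_norm_le (x + y) y)
      ((abs_nonneg _).trans (hM 0))

lemma tendsto_sub_comp_norm_div_norm {L : ℝ} (hG : ∀ r, HasDerivAt G (g r) r)
    (hM : ∀ r, |g r| ≤ M) (hlim : Tendsto (fun r => G r / r) atTop (𝓝 L)) (y : E) :
    Tendsto (fun x => (G ‖x + y‖ - G ‖y‖) / ‖x‖) (cobounded E) (𝓝 L) := by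
  have hnorm := tendsto_norm_cobounded_atTop (E := E)
  have hshift : Tendsto (fun x => (G ‖x + y‖ - G ‖x‖) / ‖x‖) (cobounded E) (𝓝 0) := by
    refine squeeze_zero_norm (fun x => ?_) ((tendsto_const_nhds (x := M * ‖y‖)).div_atTop hnorm)
    rw [norm_div, norm_norm, Real.norm_eq_abs, add_comm]
    exact div_le_div_of_nonneg_right (abs_sub_comp_norm_le hG hM y x) (norm_nonneg x)
  have := (hshift.add (hlim.comp hnorm)).sub ((tendsto_const_nhds (x := G ‖y‖)).div_atTop hnorm)
  rw [zero_add, sub_zero] at this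
  refine this.congr fun x => ?_
  simp only [Function.comp_apply]
  ring

/-- Subtracting `G ‖y‖` keeps the integrand bounded by `M * ‖x‖` when `|G'| ≤ M`. -/
noncomputable def radialPotential [MeasurableSpace E] (G : ℝ → ℝ) (ν : Measure E) (x : E) : ℝ :=
  ∫ y, (G ‖x + y‖ - G ‖y‖) ∂ν

lemma tendsto_radialPotential_div_norm [MeasurableSpace E] [BorelSpace E] {ν : Measure E}
    [IsFiniteMeasure ν] {L : ℝ} (hG : ∀ r, HasDerivAt G (g r) r) (hM : ∀ r, |g r| ≤ M)
    (hlim : Tendsto (fun r => G r / r) atTop (𝓝 L)) :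
    Tendsto (fun x => radialPotential G ν x / ‖x‖) (cobounded E) (𝓝 (L * ν.real univ)) := by
  have hGc : Continuous G := continuous_iff_continuousAt.2 fun r => (hG r).continuousAt
  have : (cobounded E).IsCountablyGenerated := comap_norm_atTop (E := E) ▸ inferInstance
  have hbound : ∀ᶠ x in cobounded E, ∀ᵐ y ∂ν, ‖(G ‖x + y‖ - G ‖y‖) / ‖x‖‖ ≤ M := by
    filter_upwards [eventually_cobounded_le_norm 1] with x hx
    refine ae_of_all _ fun y => ?_
    rw [norm_div, norm_norm, Real.norm_eq_abs, div_le_iff₀ (by positivity)]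
    exact abs_sub_comp_norm_le hG hM x y
  simpa [radialPotential, ← integral_div, mul_comm] using
    tendsto_integral_filter_of_dominated_convergence (μ := ν) (fun _ => M)
      (Eventually.of_forall fun x => (by fun_prop : Continuous fun y : E =>
        (G ‖x + y‖ - G ‖y‖) / ‖x‖).aestronglyMeasurable)
      hbound (integrable_const M) (ae_of_all _ (tendsto_sub_comp_norm_div_norm hG hM hlim))

end NormedGroup

section InnerProductSpace

variable {E : Type*} [NormedAddCommGroup E] [InnerProductSpace ℝ E] {G g : ℝ → ℝ} {M : ℝ}

lemma hasFDerivAt_norm_s10 {x : E} (hx : x ≠ 0) :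
    HasFDerivAt (fun y : E => ‖y‖) (innerSL ℝ (‖x‖⁻¹ • x)) x := by
  have hsq : HasFDerivAt (fun y : E => √(‖y‖ ^ 2))
      ((1 / (2 * √(‖x‖ ^ 2))) • 2 • innerSL ℝ x) x :=
    (Real.hasDerivAt_sqrt (by positivity)).comp_hasFDerivAt x
      (hasStrictFDerivAt_norm_sq x).hasFDerivAt
  simp only [Real.sqrt_sq (norm_nonneg _)] at hsq
  refine hsq.congr_fderiv (ContinuousLinearMap.ext fun v => ?_)
  have : ‖x‖ ≠ 0 := norm_ne_zero_iff.2 hx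
  simp only [map_smul, smul_apply, coe_innerSL_apply, smul_eq_mul, one_div,
    mul_inv_rev, nsmul_eq_mul, Nat.cast_ofNat]
  field_simp

lemma hasFDerivAt_comp_norm (hG : ∀ r, HasDerivAt G (g r) r) (hg0 : g 0 = 0) (x : E) :
    HasFDerivAt (fun y : E => G ‖y‖) (innerSL ℝ ((g ‖x‖ / ‖x‖) • x)) x := by
  rcases eq_or_ne x 0 with rfl | hx
  · have hG0 : (fun r => G r - G 0) =o[𝓝 0] fun r => r := by
      simpa [hg0] using (hG 0).hasFDerivAt.isLittleO
    have := isLittleO_norm_right.1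
      (hG0.comp_tendsto (continuous_norm.tendsto' (0 : E) 0 norm_zero))
    rw [hasFDerivAt_iff_isLittleO_nhds_zero]
    simpa [Function.comp_def] using this
  · refine ((hG ‖x‖).comp_hasFDerivAt x (hasFDerivAt_norm_s10 hx)).congr_fderiv ?_
    simp [div_eq_mul_inv, mul_smul]

lemma norm_div_norm_smul_le (c : ℝ) (z : E) : ‖(c / ‖z‖) • z‖ ≤ |c| := by
  rcases eq_or_ne z 0 with rfl | hz
  · simp
  · rw [norm_smul, Real.norm_eq_abs, abs_div, abs_norm, div_mul_cancel₀ _ (norm_ne_zero_iff.2 hz)]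

lemma hasFDerivAt_radialPotential [MeasurableSpace E] [BorelSpace E] [CompleteSpace E]
    [SecondCountableTopology E] {ν : Measure E} [IsFiniteMeasure ν]
    (hG : ∀ r, HasDerivAt G (g r) r) (hg0 : g 0 = 0) (hM : ∀ r, |g r| ≤ M) (x₀ : E) :
    HasFDerivAt (radialPotential G ν)
      (innerSL ℝ (∫ y, (g ‖x₀ + y‖ / ‖x₀ + y‖) • (x₀ + y) ∂ν)) x₀ := by
  have hGc : Continuous G := continuous_iff_continuousAt.2 fun r => (hG r).continuousAt
  have hg_meas : Measurable g := funext (fun r => (hG r).deriv) ▸ measurable_deriv G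
  have hF_meas (x : E) : AEStronglyMeasurable (fun y : E => G ‖x + y‖ - G ‖y‖) ν :=
    (by fun_prop : Continuous fun y : E => G ‖x + y‖ - G ‖y‖).aestronglyMeasurable
  have hv_meas (x : E) :
      AEStronglyMeasurable (fun y : E => (g ‖x + y‖ / ‖x + y‖) • (x + y)) ν :=
    (by fun_prop : Measurable fun y : E => (g ‖x + y‖ / ‖x + y‖) • (x + y)).aestronglyMeasurable
  have hv_le (z : E) : ‖(g ‖z‖ / ‖z‖) • z‖ ≤ M := (norm_div_norm_smul_le _ _).trans (hM _)
  have hv_int : Integrable (fun y => (g ‖x₀ + y‖ / ‖x₀ + y‖) • (x₀ + y)) ν :=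
    (integrable_const M).mono' (hv_meas x₀) (ae_of_all _ fun y => hv_le _)
  have hderiv := hasFDerivAt_integral_of_dominated_of_fderiv_le
    (F' := fun x y => innerSL ℝ ((g ‖x + y‖ / ‖x + y‖) • (x + y))) (bound := fun _ => M)
    univ_mem (Eventually.of_forall hF_meas)
    ((integrable_const (M * ‖x₀‖)).mono' (hF_meas x₀)
      (ae_of_all _ fun y => abs_sub_comp_norm_le hG hM x₀ y))
    ((innerSL ℝ).continuous.comp_aestronglyMeasurable (hv_meas x₀))
    (ae_of_all _ fun y x _ => by rw [innerSL_apply_norm]; exact hv_le _)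
    (integrable_const M)
    (ae_of_all _ fun y x _ =>
      ((hasFDerivAt_comp_add_right y).2 (hasFDerivAt_comp_norm hG hg0 (x + y))).sub_const _)
  rw [ContinuousLinearMap.integral_comp_comm _ hv_int] at hderiv
  exact hderiv

lemma exists_eq_zero_of_hasFDerivAt_innerSL_of_tendsto_cocompact {f : E → ℝ} {v : E → E}
    (hf : ∀ x, HasFDerivAt f (innerSL ℝ (v x)) x) (hcoer : Tendsto f (cocompact E) atTop) :
    ∃ x, v x = 0 := by
  obtain ⟨x, hx⟩ :=
    (continuous_iff_continuousAt.2 fun x => (hf x).continuousAt).exists_forall_le hcoer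
  have hmin : IsLocalMin f x := Eventually.of_forall hx
  exact ⟨x, by simpa using congr($(hmin.hasFDerivAt_eq_zero (hf x)) (v x))⟩

theorem exists_integral_radial_sub_integral_radial_eq_zero [FiniteDimensional ℝ E]
    [MeasurableSpace E] [BorelSpace E] (ν₁ ν₂ : Measure E) [IsFiniteMeasure ν₁]
    [IsFiniteMeasure ν₂] (hν : ν₂.real univ < ν₁.real univ) (hg : Continuous g)
    (hg0 : g 0 = 0) (hM : ∀ r, |g r| ≤ M) {L : ℝ} (hL : 0 < L) (hlim : Tendsto g atTop (𝓝 L)) :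
    ∃ x : E, (∫ y, (g ‖x + y‖ / ‖x + y‖) • (x + y) ∂ν₁) -
      ∫ y, (g ‖x + y‖ / ‖x + y‖) • (x + y) ∂ν₂ = 0 := by
  set G : ℝ → ℝ := fun r => ∫ t in (0 : ℝ)..r, g t
  have hG (r : ℝ) : HasDerivAt G (g r) r := (hg.integral_hasStrictDerivAt 0 r).hasDerivAt
  have hGlim := tendsto_div_self_atTop_of_hasDerivAt hG hlim
  refine exists_eq_zero_of_hasFDerivAt_innerSL_of_tendsto_cocompact
    (f := radialPotential G ν₁ - radialPotential G ν₂) (fun x => ?_) ?_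
  · rw [map_sub]
    exact (hasFDerivAt_radialPotential hG hg0 hM x).sub (hasFDerivAt_radialPotential hG hg0 hM x)
  · rw [← Metric.cobounded_eq_cocompact]
    refine tendsto_cobounded_atTop_of_tendsto_div_norm (mul_pos hL (sub_pos.2 hν)) ?_
    rw [mul_sub]
    refine ((tendsto_radialPotential_div_norm hG hM hGlim).sub
      (tendsto_radialPotential_div_norm hG hM hGlim)).congr fun x => ?_
    exact (sub_div (radialPotential G ν₁ x) _ _).symm

end InnerProductSpace

theorem center_of_mass_exists_signed_general {n : ℕ}
    (g : ℝ → ℝ) (hg_cont : ContinuousOn g (Ici 0)) (hg0 : g 0 = 0)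
    (ginf : ℝ) (hginf_pos : 0 < ginf) (hg_lim : Tendsto g atTop (𝓝 ginf))
    (μ : SignedMeasure (EuclideanSpace ℝ (Fin n)))
    (hμpos : 0 < μ Set.univ) :
    ∃ xc : EuclideanSpace ℝ (Fin n), VFieldSigned g μ xc = 0 := by
  -- `g (|r|)` extends `g` continuously to all of `ℝ` without changing `radialField g`.
  set ge : ℝ → ℝ := fun r => g |r|
  have hge : Continuous ge := hg_cont.comp_continuous continuous_abs fun r => abs_nonneg r
  have hge_lim : Tendsto ge atTop (𝓝 ginf) := hg_lim.congr' <| by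
    filter_upwards [eventually_ge_atTop 0] with r hr using by simp [ge, abs_of_nonneg hr]
  obtain ⟨M, hM⟩ := hge.exists_abs_le_of_even_of_tendsto (fun r => by simp [ge]) hge_lim
  rw [μ.apply_eq_posPart_real_sub_negPart_real MeasurableSet.univ, sub_pos] at hμpos
  obtain ⟨x, hx⟩ := exists_integral_radial_sub_integral_radial_eq_zero _ _ hμpos hge
    (by simp [ge, hg0]) hM hginf_pos hge_lim
  exact ⟨x, by simpa [VFieldSigned, radialField, ge] using hx⟩

theorem center_of_mass_exists_signed {n : ℕ} (hn : 1 ≤ n)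
    (g : ℝ → ℝ) (hg_cont : ContinuousOn g (Ici 0)) (hg0 : g 0 = 0)
    (ginf : ℝ) (hginf_pos : 0 < ginf) (hg_lim : Tendsto g atTop (𝓝 ginf))
    (μ : SignedMeasure (EuclideanSpace ℝ (Fin n)))
    (hμpos : 0 < μ Set.univ) :
    ∃ xc : EuclideanSpace ℝ (Fin n), VFieldSigned g μ xc = 0 :=
  center_of_mass_exists_signed_general g hg_cont hg0 ginf hginf_pos hg_lim μ hμpos
end

section
/- Assume the limiting value g(∞) = lim_{r→∞} g(r) exists and is finite. Then for every compact set X ⊂ ℝⁿ, the function (x, y) ↦ Γ(x+y) − Γ(y) is continuous and bounded on X × ℝⁿ. -/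
/-!
A continuous `g` with a finite limit at infinity is bounded on `[0, ∞)`, say by `M`, so `G` is
`M`-Lipschitz there. Hence `Γ = G ∘ ‖·‖` is continuous and
`|Γ(x + y) - Γ(y)| ≤ M |‖x + y‖ - ‖y‖| ≤ M ‖x‖`, which is bounded for `x` in a compact set.
-/

open MeasureTheory Filter Set Topology
open scoped NNReal

/-- The energy kernel `Γ(x) = G(|x|)`, where `G(r) = ∫₀^r g(s) ds`. -/
noncomputable def Gam {n : ℕ} (g : ℝ → ℝ)
    (x : EuclideanSpace ℝ (Fin n)) : ℝ :=
  ∫ s in (0:ℝ)..‖x‖, g s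

theorem ContinuousOn.exists_norm_le_of_tendsto_atTop {E : Type*} [SeminormedAddCommGroup E]
    {f : ℝ → E} {a : ℝ} {l : E} (hf : ContinuousOn f (Ici a)) (hlim : Tendsto f atTop (𝓝 l)) :
    ∃ C : ℝ, ∀ s ∈ Ici a, ‖f s‖ ≤ C := by
  obtain ⟨A, hA⟩ := eventually_atTop.1 (hlim.norm.eventually (gt_mem_nhds (lt_add_one ‖l‖)))
  obtain ⟨C, hC⟩ := (isCompact_Icc (a := a) (b := A)).exists_bound_of_continuousOn
    (hf.mono Icc_subset_Ici_self)
  refine ⟨max C (‖l‖ + 1), fun s hs => ?_⟩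
  rcases le_total s A with h | h
  · exact (hC s ⟨hs, h⟩).trans (le_max_left _ _)
  · exact (hA s h).le.trans (le_max_right _ _)

theorem lipschitzOnWith_intervalIntegral_Ici {E : Type*} [NormedAddCommGroup E]
    [NormedSpace ℝ E] {f : ℝ → E} {a : ℝ} {K : ℝ≥0} (hf : ContinuousOn f (Ici a))
    (hK : ∀ s ∈ Ici a, ‖f s‖ ≤ K) :
    LipschitzOnWith K (fun r => ∫ s in a..r, f s) (Ici a) := by
  have hint : ∀ {b c}, b ∈ Ici a → c ∈ Ici a → IntervalIntegrable f volume b c :=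
    fun hb hc => (hf.mono (ordConnected_Ici.uIcc_subset hb hc)).intervalIntegrable
  refine LipschitzOnWith.of_dist_le_mul fun x hx y hy => ?_
  rw [dist_eq_norm, intervalIntegral.integral_interval_sub_left (hint self_mem_Ici hx)
    (hint self_mem_Ici hy), Real.dist_eq]
  exact intervalIntegral.norm_integral_le_of_norm_le_const fun s hs =>
    hK s (ordConnected_Ici.uIcc_subset hy hx (uIoc_subset_uIcc hs))

section Gam

variable {n : ℕ} {g : ℝ → ℝ} {K : ℝ≥0}

theorem continuous_Gam (hL : LipschitzOnWith K (fun r => ∫ s in (0:ℝ)..r, g s) (Ici 0)) :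
    Continuous (Gam (n := n) g) :=
  hL.continuousOn.comp_continuous continuous_norm norm_nonneg

theorem abs_Gam_add_sub_le (hL : LipschitzOnWith K (fun r => ∫ s in (0:ℝ)..r, g s) (Ici 0))
    (x y : EuclideanSpace ℝ (Fin n)) : |Gam g (x + y) - Gam g y| ≤ K * ‖x‖ :=
  calc |Gam g (x + y) - Gam g y| ≤ K * |‖x + y‖ - ‖y‖| := by
        simpa only [Gam, Real.dist_eq] using
          hL.dist_le_mul _ (norm_nonneg (x + y)) _ (norm_nonneg y)
    _ ≤ K * ‖x‖ := by
        gcongr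
        simpa using abs_norm_sub_norm_le (x + y) y

end Gam

theorem renormalized_kernel_continuous_bounded_general {n : ℕ}
    (g : ℝ → ℝ) (hg_cont : ContinuousOn g (Ici 0))
    (ginf : ℝ) (hg_lim : Tendsto g atTop (𝓝 ginf))
    (X : Set (EuclideanSpace ℝ (Fin n))) (hX : IsCompact X) :
    ContinuousOn
      (fun p : EuclideanSpace ℝ (Fin n) × EuclideanSpace ℝ (Fin n) =>
        Gam g (p.1 + p.2) - Gam g p.2) (X ×ˢ Set.univ) ∧
    ∃ C : ℝ, ∀ x ∈ X, ∀ y : EuclideanSpace ℝ (Fin n),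
      |Gam g (x + y) - Gam g y| ≤ C := by
  obtain ⟨M, hM⟩ := hg_cont.exists_norm_le_of_tendsto_atTop hg_lim
  have hL := lipschitzOnWith_intervalIntegral_Ici (K := M.toNNReal) hg_cont
    fun s hs => (hM s hs).trans (Real.le_coe_toNNReal M)
  have hΓ : Continuous (Gam (n := n) g) := continuous_Gam hL
  obtain ⟨R, hR⟩ := hX.isBounded.exists_norm_le
  refine ⟨((hΓ.comp continuous_add).sub (hΓ.comp continuous_snd)).continuousOn,
    M.toNNReal * R, fun x hx y => ?_⟩
  exact (abs_Gam_add_sub_le hL x y).trans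
    (mul_le_mul_of_nonneg_left (hR x hx) M.toNNReal.coe_nonneg)

theorem renormalized_kernel_continuous_bounded {n : ℕ} (hn : 1 ≤ n)
    (g : ℝ → ℝ) (hg_cont : ContinuousOn g (Ici 0)) (hg0 : g 0 = 0)
    (ginf : ℝ) (hg_lim : Tendsto g atTop (𝓝 ginf))
    (X : Set (EuclideanSpace ℝ (Fin n))) (hX : IsCompact X) :
    ContinuousOn
      (fun p : EuclideanSpace ℝ (Fin n) × EuclideanSpace ℝ (Fin n) =>
        Gam g (p.1 + p.2) - Gam g p.2) (X ×ˢ Set.univ) ∧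
    ∃ C : ℝ, ∀ x ∈ X, ∀ y : EuclideanSpace ℝ (Fin n),
      |Gam g (x + y) - Gam g y| ≤ C :=
  renormalized_kernel_continuous_bounded_general g hg_cont ginf hg_lim X hX
end

section
/- Suppose the limiting value g(∞) = lim_{r→∞} g(r) exists and is positive and finite, and fix R > 0. Then there exists M > 0 such that for all x ∈ ℝⁿ with |x| ≥ M and all y ∈ ℝⁿ with |y| < R, one has Γ(x+y) − Γ(y) > (1/2) g(∞) |x|. -/
/-!
`G(r) = ∫₀^r g` grows like `g(∞) r` up to a bounded error: since `g > (3/4) g(∞)` beyond some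
radius and `g` is bounded before it, `G(r) ≥ (3/4) g(∞) r - C` for all `r ≥ 0`, while `G` is
bounded on `[0, R]`. As `|x + y| ≥ |x| - R`, this gives
`Γ(x + y) - Γ(y) ≥ (3/4) g(∞) |x| - C'`, which exceeds `(1/2) g(∞) |x|` once `|x|` is large.
-/

open MeasureTheory Filter Set Topology

lemma intervalIntegrable_of_continuousOn_Ici {g : ℝ → ℝ} (hg : ContinuousOn g (Ici 0))
    {a b : ℝ} (ha : 0 ≤ a) (hb : 0 ≤ b) : IntervalIntegrable g volume a b :=
  (hg.mono fun _ hs => le_trans (le_min ha hb) hs.1).intervalIntegrable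

lemma exists_abs_primitive_le_of_continuousOn_Ici {g : ℝ → ℝ} (hg : ContinuousOn g (Ici 0))
    (T : ℝ) : ∃ K, ∀ r ∈ Icc 0 T, |∫ s in (0 : ℝ)..r, g s| ≤ K := by
  obtain ⟨B, hB⟩ := isCompact_Icc.exists_bound_of_continuousOn
    (hg.mono (Icc_subset_Ici_self : Icc 0 T ⊆ Ici 0))
  refine ⟨B * T, fun r hr => ?_⟩
  have hB0 : 0 ≤ B := (norm_nonneg _).trans (hB r hr)
  have hint := intervalIntegral.norm_integral_le_of_norm_le_const (a := 0) (b := r) (C := B)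
    fun s hs => by
      rw [uIoc_of_le hr.1] at hs
      exact hB s ⟨hs.1.le, hs.2.trans hr.2⟩
  rw [Real.norm_eq_abs, sub_zero, abs_of_nonneg hr.1] at hint
  exact hint.trans (mul_le_mul_of_nonneg_left hr.2 hB0)

lemma exists_add_mul_le_primitive {g : ℝ → ℝ} {L c : ℝ} (hg : ContinuousOn g (Ici 0))
    (hlim : Tendsto g atTop (𝓝 L)) (hc : c < L) :
    ∃ m, ∀ r, 0 ≤ r → m + c * r ≤ ∫ s in (0 : ℝ)..r, g s := by
  obtain ⟨r₁, hr₁⟩ := (hlim.eventually (eventually_gt_nhds hc)).exists_forall_of_atTop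
  set T := max r₁ 0
  have hT0 : 0 ≤ T := le_max_right _ _
  obtain ⟨K, hK⟩ := exists_abs_primitive_le_of_continuousOn_Ici hg T
  have hcT : c * T ≤ |c| * T := mul_le_mul_of_nonneg_right (le_abs_self c) hT0
  refine ⟨-K - |c| * T, fun r hr => ?_⟩
  rcases le_total r T with hrT | hTr
  · have hcr : c * r ≤ |c| * T :=
      (mul_le_mul_of_nonneg_right (le_abs_self c) hr).trans
        (mul_le_mul_of_nonneg_left hrT (abs_nonneg c))
    linarith [(abs_le.1 (hK r ⟨hr, hrT⟩)).1]
  · have htail : c * (r - T) ≤ ∫ s in T..r, g s := by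
      have := intervalIntegral.integral_mono_on hTr intervalIntegrable_const
        (intervalIntegrable_of_continuousOn_Ici hg hT0 hr)
        fun s hs => (hr₁ s ((le_max_left _ _).trans hs.1)).le
      rwa [intervalIntegral.integral_const, smul_eq_mul, mul_comm] at this
    rw [← intervalIntegral.integral_add_adjacent_intervals
      (intervalIntegrable_of_continuousOn_Ici hg le_rfl hT0)
      (intervalIntegrable_of_continuousOn_Ici hg hT0 hr)]
    linarith [(abs_le.1 (hK T ⟨hT0, le_rfl⟩)).1]

lemma exists_half_mul_lt_primitive_sub {g : ℝ → ℝ} {L : ℝ} (hg : ContinuousOn g (Ici 0))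
    (hlim : Tendsto g atTop (𝓝 L)) (hL : 0 < L) (R : ℝ) :
    ∃ M, 0 < M ∧ ∀ ρ a b, M ≤ ρ → 0 ≤ a → a ≤ R → 0 ≤ b → ρ - R ≤ b →
      1 / 2 * L * ρ < (∫ s in (0 : ℝ)..b, g s) - ∫ s in (0 : ℝ)..a, g s := by
  obtain ⟨m, hm⟩ := exists_add_mul_le_primitive hg hlim (by linarith : 3 / 4 * L < L)
  obtain ⟨K, hK⟩ := exists_abs_primitive_le_of_continuousOn_Ici hg R
  set D := K - m + 3 / 4 * L * R with hD_def
  refine ⟨max 1 ((4 * D + 4) / L), by positivity, fun ρ a b hρ ha haR hb hρb => ?_⟩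
  have hD : 4 * D + 4 ≤ ρ * L := (div_le_iff₀ hL).1 ((le_max_right _ _).trans hρ)
  have hcb : 3 / 4 * L * (ρ - R) ≤ 3 / 4 * L * b :=
    mul_le_mul_of_nonneg_left hρb (by positivity)
  linarith [hm b hb, (abs_le.1 (hK a ⟨ha, haR⟩)).2, hD_def]

theorem renormalized_kernel_lower_bound_general {n : ℕ}
    (g : ℝ → ℝ) (hg_cont : ContinuousOn g (Ici 0))
    (ginf : ℝ) (hginf_pos : 0 < ginf) (hg_lim : Tendsto g atTop (𝓝 ginf))
    (R : ℝ) :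
    ∃ M : ℝ, 0 < M ∧ ∀ x y : EuclideanSpace ℝ (Fin n), M ≤ ‖x‖ → ‖y‖ < R →
      (1 / 2) * ginf * ‖x‖ < Gam g (x + y) - Gam g y := by
  obtain ⟨M, hM, hbound⟩ := exists_half_mul_lt_primitive_sub hg_cont hg_lim hginf_pos R
  refine ⟨M, hM, fun x y hx hy => hbound _ _ _ hx (norm_nonneg y) hy.le (norm_nonneg _) ?_⟩
  linarith [norm_sub_le_norm_add x y]

theorem renormalized_kernel_lower_bound {n : ℕ} (hn : 1 ≤ n)
    (g : ℝ → ℝ) (hg_cont : ContinuousOn g (Ici 0)) (hg0 : g 0 = 0)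
    (ginf : ℝ) (hginf_pos : 0 < ginf) (hg_lim : Tendsto g atTop (𝓝 ginf))
    (R : ℝ) (hR : 0 < R) :
    ∃ M : ℝ, 0 < M ∧ ∀ x y : EuclideanSpace ℝ (Fin n), M ≤ ‖x‖ → ‖y‖ < R →
      (1 / 2) * ginf * ‖x‖ < Gam g (x + y) - Gam g y :=
  renormalized_kernel_lower_bound_general g hg_cont ginf hginf_pos hg_lim R
end

section
/- Suppose the limiting value g(∞) = lim_{r→∞} g(r) exists and is positive and finite, and fix 0 < ε < 1/2 and R > 0. Then there exists M > 0 such that for all x ∈ ℝⁿ with |x| ≥ M and all y ∈ ℝⁿ with |y| < R, one has (1−2ε) g(∞) |x| < Γ(x+y) − Γ(y) < (1+2ε) g(∞) |x|. -/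
/-!
`Γ(x + y) - Γ(y) = ∫_{|y|}^{|x+y|} g` and `|x+y| - |y|` differs from `|x|` by less than `2R`,
so it suffices to compare this integral with `g(∞) (|x+y| - |y|)`. As `g → g(∞)` and `g` is
continuous on `[0, ∞)`, `∫_0^b |g - g(∞)| ≤ K + ε g(∞) b` for a constant `K`, so the error is
`K + O(R) + ε g(∞) |x|`, which is less than `2 ε g(∞) |x|` once `|x|` is large.
-/

open MeasureTheory Filter Set Topology

section

variable {E : Type*} [NormedAddCommGroup E]

theorem ContinuousOn.intervalIntegrable_of_Ici {g : ℝ → E} {c a b : ℝ}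
    (hg : ContinuousOn g (Ici c)) (ha : c ≤ a) (hb : c ≤ b) :
    IntervalIntegrable g volume a b :=
  (hg.mono fun _ hs => le_trans (le_min ha hb) hs.1).intervalIntegrable

theorem exists_integral_norm_sub_le_of_tendsto {g : ℝ → E} {L : E}
    (hg : ContinuousOn g (Ici 0)) (hlim : Tendsto g atTop (𝓝 L)) {δ : ℝ} (hδ : 0 < δ) :
    ∃ K, ∀ b, 0 ≤ b → ∫ s in (0:ℝ)..b, ‖g s - L‖ ≤ K + δ * b := by
  obtain ⟨r, hr⟩ := eventually_atTop.mp ((Metric.tendsto_nhds.mp hlim) δ hδ)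
  set r₀ := max r 0
  have hint : ∀ a b, 0 ≤ a → 0 ≤ b →
      IntervalIntegrable (fun s => ‖g s - L‖) volume a b :=
    fun a b ha hb => ((hg.sub continuousOn_const).norm).intervalIntegrable_of_Ici ha hb
  refine ⟨∫ s in (0:ℝ)..r₀, ‖g s - L‖, fun b hb => ?_⟩
  have hr₀ : 0 ≤ r₀ := le_max_right _ _
  set m := max b r₀
  have hm : 0 ≤ m := hb.trans (le_max_left _ _)
  have htail : ∫ s in r₀..m, ‖g s - L‖ ≤ δ * (m - r₀) := by
    have := intervalIntegral.integral_mono_on (le_max_right b r₀) (hint _ _ hr₀ hm)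
      intervalIntegrable_const fun s hs =>
        (dist_eq_norm (g s) L ▸ hr s ((le_max_left r 0).trans hs.1)).le
    simpa [mul_comm] using this
  calc ∫ s in (0:ℝ)..b, ‖g s - L‖
      ≤ ∫ s in (0:ℝ)..m, ‖g s - L‖ :=
        intervalIntegral.integral_mono_interval le_rfl hb (le_max_left _ _)
          (Eventually.of_forall fun _ => norm_nonneg _) (hint _ _ le_rfl hm)
    _ = (∫ s in (0:ℝ)..r₀, ‖g s - L‖) + ∫ s in r₀..m, ‖g s - L‖ :=
        (intervalIntegral.integral_add_adjacent_intervals (hint _ _ le_rfl hr₀)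
          (hint _ _ hr₀ hm)).symm
    _ ≤ (∫ s in (0:ℝ)..r₀, ‖g s - L‖) + δ * b := by
        gcongr
        exact htail.trans <| by
          gcongr; exact sub_le_iff_le_add.mpr (max_le (by linarith) (by linarith))

theorem exists_norm_integral_sub_smul_le_of_tendsto [NormedSpace ℝ E] [CompleteSpace E]
    {g : ℝ → E} {L : E}
    (hg : ContinuousOn g (Ici 0)) (hlim : Tendsto g atTop (𝓝 L)) {δ : ℝ} (hδ : 0 < δ) :
    ∃ K, ∀ a b, 0 ≤ a → a ≤ b →
      ‖(∫ s in a..b, g s) - (b - a) • L‖ ≤ K + δ * b := by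
  obtain ⟨K, hK⟩ := exists_integral_norm_sub_le_of_tendsto hg hlim hδ
  refine ⟨K, fun a b ha hab => ?_⟩
  have hb : 0 ≤ b := ha.trans hab
  calc ‖(∫ s in a..b, g s) - (b - a) • L‖ = ‖∫ s in a..b, (g s - L)‖ := by
        rw [intervalIntegral.integral_sub (hg.intervalIntegrable_of_Ici ha hb)
          intervalIntegrable_const, intervalIntegral.integral_const]
    _ ≤ ∫ s in a..b, ‖g s - L‖ := intervalIntegral.norm_integral_le_integral_norm hab
    _ ≤ ∫ s in (0:ℝ)..b, ‖g s - L‖ :=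
        intervalIntegral.integral_mono_interval ha hab le_rfl
          (Eventually.of_forall fun _ => norm_nonneg _)
          ((hg.sub continuousOn_const).norm.intervalIntegrable_of_Ici le_rfl hb)
    _ ≤ K + δ * b := hK b hb

end

theorem Gam_sub_Gam {n : ℕ} {g : ℝ → ℝ} (hg : ContinuousOn g (Ici 0))
    (x y : EuclideanSpace ℝ (Fin n)) : Gam g x - Gam g y = ∫ s in ‖y‖..‖x‖, g s :=
  intervalIntegral.integral_interval_sub_left
    (hg.intervalIntegrable_of_Ici le_rfl (norm_nonneg x))
    (hg.intervalIntegrable_of_Ici le_rfl (norm_nonneg y))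

theorem renormalized_kernel_two_sided_bound_general {n : ℕ}
    (g : ℝ → ℝ) (hg_cont : ContinuousOn g (Ici 0))
    (ginf : ℝ) (hginf_pos : 0 < ginf) (hg_lim : Tendsto g atTop (𝓝 ginf))
    (ε : ℝ) (hε0 : 0 < ε) (R : ℝ) (hR : 0 < R) :
    ∃ M : ℝ, 0 < M ∧ ∀ x y : EuclideanSpace ℝ (Fin n), M ≤ ‖x‖ → ‖y‖ < R →
      (1 - 2 * ε) * ginf * ‖x‖ < Gam g (x + y) - Gam g y ∧
      Gam g (x + y) - Gam g y < (1 + 2 * ε) * ginf * ‖x‖ := by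
  have hδ : 0 < ε * ginf := mul_pos hε0 hginf_pos
  obtain ⟨K, hK⟩ := exists_norm_integral_sub_smul_le_of_tendsto hg_cont hg_lim hδ
  refine ⟨(|K| + 3 * ginf * R) / (ε * ginf) + 2 * R, by positivity, fun x y hx hy => ?_⟩
  have hxM : |K| + 3 * ginf * R + 2 * R * (ε * ginf) ≤ ε * ginf * ‖x‖ := by
    have := mul_le_mul_of_nonneg_left hx hδ.le
    rwa [mul_add, mul_div_cancel₀ _ hδ.ne', mul_comm (ε * ginf) (2 * R)] at this
  have hX : 2 * R ≤ ‖x‖ := le_trans (le_add_of_nonneg_left (by positivity)) hx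
  have hxy_le : ‖x + y‖ ≤ ‖x‖ + ‖y‖ := norm_add_le x y
  have hxy_ge : ‖x‖ - ‖y‖ ≤ ‖x + y‖ := by simpa using norm_sub_norm_le x (-y)
  have hbound := abs_le.mp (hK ‖y‖ ‖x + y‖ (norm_nonneg y) (by linarith))
  rw [smul_eq_mul] at hbound
  rw [Gam_sub_Gam hg_cont]
  have hy_lt : 0 < R - ‖y‖ := by linarith
  constructor <;> nlinarith [le_abs_self K, mul_pos hginf_pos hy_lt, mul_pos hδ hy_lt,
    mul_le_mul_of_nonneg_left hxy_le hginf_pos.le, mul_le_mul_of_nonneg_left hxy_ge hginf_pos.le,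
    mul_le_mul_of_nonneg_left hxy_le hδ.le]

theorem renormalized_kernel_two_sided_bound {n : ℕ} (hn : 1 ≤ n)
    (g : ℝ → ℝ) (hg_cont : ContinuousOn g (Ici 0)) (hg0 : g 0 = 0)
    (ginf : ℝ) (hginf_pos : 0 < ginf) (hg_lim : Tendsto g atTop (𝓝 ginf))
    (ε : ℝ) (hε0 : 0 < ε) (hε2 : ε < 1 / 2) (R : ℝ) (hR : 0 < R) :
    ∃ M : ℝ, 0 < M ∧ ∀ x y : EuclideanSpace ℝ (Fin n), M ≤ ‖x‖ → ‖y‖ < R →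
      (1 - 2 * ε) * ginf * ‖x‖ < Gam g (x + y) - Gam g y ∧
      Gam g (x + y) - Gam g y < (1 + 2 * ε) * ginf * ‖x‖ :=
  renormalized_kernel_two_sided_bound_general g hg_cont ginf hginf_pos hg_lim ε hε0 R hR
end

section
/- Suppose g has a positive and finite limit at infinity, g(∞) := lim_{r→∞} g(r) with 0 < g(∞) < ∞, and let μ be a Borel measure on ℝⁿ with 0 < μ(ℝⁿ) < ∞. Then the renormalized energy 𝓔(x) = ∫_{ℝⁿ} (Γ(x+y) − Γ(y)) dμ(y) is finite for every x ∈ ℝⁿ, and 𝓔(x) → ∞ as |x| → ∞. -/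
open MeasureTheory Filter Set Topology

/-!
Let `M` bound `|g|` on `[0, ∞)`. Then `Γ` is `M`-Lipschitz, so the integrand `Γ(x + y) - Γ(y)` is
bounded by `M‖x‖` and is integrable against the finite measure `μ`. Since `G(r)/r → g(∞)`, the
quotient `(Γ(x + y) - Γ(y))/‖x‖` tends to `g(∞)` for every fixed `y`; dominated convergence gives
`𝓔(x)/‖x‖ → g(∞) μ(ℝⁿ) > 0`, hence `𝓔(x) → ∞`.
-/

lemma exists_abs_le_of_continuousOn_Ici_of_tendsto {f : ℝ → ℝ} {a L : ℝ}
    (hf : ContinuousOn f (Ici a)) (hlim : Tendsto f atTop (𝓝 L)) :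
    ∃ M, ∀ s ∈ Ici a, |f s| ≤ M := by
  obtain ⟨R, hR⟩ := (hlim.abs.eventually (gt_mem_nhds (lt_add_one |L|))).exists_forall_of_atTop
  obtain ⟨C, hC⟩ := isCompact_Icc.exists_bound_of_continuousOn
    (hf.mono (Icc_subset_Ici_self : Icc a R ⊆ Ici a))
  refine ⟨max C (|L| + 1), fun s hs => ?_⟩
  rcases le_total s R with hsR | hRs
  · exact (hC s ⟨hs, hsR⟩).trans (le_max_left _ _)
  · exact (hR s hRs).le.trans (le_max_right _ _)

section Primitive

open scoped Interval

variable {f : ℝ → ℝ} {M L : ℝ}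

lemma abs_primitive_sub_le (hf : ContinuousOn f (Ici 0)) (hM : ∀ s ∈ Ici 0, |f s| ≤ M)
    {a b : ℝ} (ha : 0 ≤ a) (hb : 0 ≤ b) :
    |(∫ s in (0:ℝ)..b, f s) - ∫ s in (0:ℝ)..a, f s| ≤ M * |b - a| := by
  have hint : ∀ c, 0 ≤ c → IntervalIntegrable f volume 0 c := fun c hc =>
    (hf.mono (by rw [uIcc_of_le hc]; exact Icc_subset_Ici_self)).intervalIntegrable
  rw [intervalIntegral.integral_interval_sub_left (hint b hb) (hint a ha), ← Real.norm_eq_abs]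
  refine intervalIntegral.norm_integral_le_of_norm_le_const fun s hs => ?_
  rw [Real.norm_eq_abs]
  exact hM s ((le_min ha hb).trans hs.1.le)

/-- Substituting `s = r t` gives `G(r)/r = ∫₀¹ f(r t) dt`, and the right side converges by
dominated convergence. -/
lemma tendsto_primitive_div_atTop (hf : ContinuousOn f (Ici 0))
    (hlim : Tendsto f atTop (𝓝 L)) :
    Tendsto (fun r => (∫ s in (0:ℝ)..r, f s) / r) atTop (𝓝 L) := by
  obtain ⟨M, hM⟩ := exists_abs_le_of_continuousOn_Ici_of_tendsto hf hlim
  have hI : Ι (0:ℝ) 1 = Ioc 0 1 := uIoc_of_le zero_le_one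
  have hmaps : ∀ r, 0 ≤ r → MapsTo (fun t => r * t) (Ι (0:ℝ) 1) (Ici 0) := fun r hr t ht =>
    mul_nonneg hr (hI ▸ ht).1.le
  have hscaled : Tendsto (fun r => ∫ t in (0:ℝ)..1, f (r * t)) atTop
      (𝓝 (∫ _ in (0:ℝ)..1, L)) := by
    refine intervalIntegral.tendsto_integral_filter_of_dominated_convergence (fun _ => M)
      ?_ ?_ intervalIntegrable_const ?_
    · filter_upwards [eventually_ge_atTop 0] with r hr
      exact (hf.comp (continuous_const_mul r).continuousOn (hmaps r hr)).aestronglyMeasurable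
        measurableSet_uIoc
    · filter_upwards [eventually_ge_atTop 0] with r hr
      exact ae_of_all _ fun t ht => hM _ (hmaps r hr ht)
    · exact ae_of_all _ fun t ht => hlim.comp (tendsto_id.atTop_mul_const (hI ▸ ht).1)
  have hsubst : ∀ᶠ r in atTop, ∫ t in (0:ℝ)..1, f (r * t) = (∫ s in (0:ℝ)..r, f s) / r := by
    filter_upwards [eventually_gt_atTop 0] with r hr
    rw [intervalIntegral.integral_comp_mul_left _ hr.ne']
    simp [div_eq_inv_mul]
  simpa using hscaled.congr' hsubst

end Primitive

section Kernel

variable {n : ℕ} {g : ℝ → ℝ} {M L : ℝ}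

lemma abs_Gam_sub_le (hg : ContinuousOn g (Ici 0)) (hM : ∀ s ∈ Ici 0, |g s| ≤ M)
    (x y : EuclideanSpace ℝ (Fin n)) : |Gam g x - Gam g y| ≤ M * ‖x - y‖ := by
  have hM0 : 0 ≤ M := (abs_nonneg _).trans (hM 0 self_mem_Ici)
  exact (abs_primitive_sub_le hg hM (norm_nonneg y) (norm_nonneg x)).trans
    (mul_le_mul_of_nonneg_left (abs_norm_sub_norm_le x y) hM0)

lemma continuous_Gam_s19 (hg : ContinuousOn g (Ici 0)) (hM : ∀ s ∈ Ici 0, |g s| ≤ M) :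
    Continuous (Gam (n := n) g) := by
  refine (LipschitzWith.of_dist_le' (K := M) fun x y => ?_).continuous
  simpa [Real.dist_eq, dist_eq_norm] using abs_Gam_sub_le hg hM x y

lemma tendsto_Gam_add_sub_div_norm (hg : ContinuousOn g (Ici 0)) (hM : ∀ s ∈ Ici 0, |g s| ≤ M)
    (hlim : Tendsto g atTop (𝓝 L)) (y : EuclideanSpace ℝ (Fin n)) :
    Tendsto (fun x => (Gam g (x + y) - Gam g y) / ‖x‖) (comap norm atTop) (𝓝 L) := by
  have hnorm : Tendsto (fun x : EuclideanSpace ℝ (Fin n) => ‖x‖) (comap norm atTop) atTop :=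
    tendsto_comap
  have hshift : Tendsto (fun x => (Gam g (x + y) - Gam g x) / ‖x‖) (comap norm atTop) (𝓝 0) := by
    refine squeeze_zero_norm (fun x => ?_) ((tendsto_const_nhds (x := M * ‖y‖)).div_atTop hnorm)
    rw [Real.norm_eq_abs, abs_div, abs_norm]
    gcongr
    simpa using abs_Gam_sub_le hg hM (x + y) x
  have hmain : Tendsto (fun x => Gam g x / ‖x‖) (comap norm atTop) (𝓝 L) :=
    (tendsto_primitive_div_atTop hg hlim).comp hnorm
  have hconst : Tendsto (fun x => Gam g y / ‖x‖) (comap norm atTop) (𝓝 0) :=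
    tendsto_const_nhds.div_atTop hnorm
  have hsum := (hshift.add hmain).sub hconst
  rw [zero_add, sub_zero] at hsum
  exact hsum.congr fun x => by ring

end Kernel

theorem tendsto_integral_atTop_of_tendsto_div {ι α : Type*} [MeasurableSpace α]
    {μ : Measure α} [IsFiniteMeasure μ] [NeZero μ] {l : Filter ι} [l.IsCountablyGenerated]
    {K : ι → α → ℝ} {h : ι → ℝ} {M c : ℝ} (hK : ∀ i, AEStronglyMeasurable (K i) μ)
    (hbound : ∀ i a, |K i a| ≤ M * h i) (hh : Tendsto h l atTop)
    (hlim : ∀ a, Tendsto (fun i => K i a / h i) l (𝓝 c)) (hc : 0 < c) :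
    Tendsto (fun i => ∫ a, K i a ∂μ) l atTop := by
  have hdiv : Tendsto (fun i => ∫ a, K i a / h i ∂μ) l (𝓝 (∫ _, c ∂μ)) := by
    refine tendsto_integral_filter_of_dominated_convergence (fun _ => M)
      (Eventually.of_forall fun i => (hK i).mul_const (h i)⁻¹) ?_ (integrable_const M)
      (ae_of_all _ hlim)
    filter_upwards [hh.eventually_gt_atTop 0] with i hi
    refine ae_of_all _ fun a => ?_
    rw [Real.norm_eq_abs, abs_div, abs_of_pos hi, div_le_iff₀ hi]
    exact hbound i a
  rw [integral_const, smul_eq_mul] at hdiv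
  exact hh.num (mul_pos measureReal_univ_pos hc) (by simpa only [integral_div] using hdiv)

theorem renormalized_energy_finite_and_coercive_general {n : ℕ}
    (g : ℝ → ℝ) (hg_cont : ContinuousOn g (Ici 0))
    (ginf : ℝ) (hginf_pos : 0 < ginf) (hg_lim : Tendsto g atTop (𝓝 ginf))
    (μ : Measure (EuclideanSpace ℝ (Fin n)))
    (hμpos : 0 < μ Set.univ) (hμfin : μ Set.univ < ⊤) :
    (∀ x : EuclideanSpace ℝ (Fin n),
      Integrable (fun y => Gam g (x + y) - Gam g y) μ) ∧
    Tendsto (fun x : EuclideanSpace ℝ (Fin n) => ∫ y, (Gam g (x + y) - Gam g y) ∂μ)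
      (comap (fun x : EuclideanSpace ℝ (Fin n) => ‖x‖) atTop) atTop := by
  have : IsFiniteMeasure μ := ⟨hμfin⟩
  have : NeZero μ := ⟨Measure.measure_univ_pos.mp hμpos⟩
  obtain ⟨M, hM⟩ := exists_abs_le_of_continuousOn_Ici_of_tendsto hg_cont hg_lim
  have hbound : ∀ x y : EuclideanSpace ℝ (Fin n), |Gam g (x + y) - Gam g y| ≤ M * ‖x‖ :=
    fun x y => by simpa using abs_Gam_sub_le hg_cont hM (x + y) y
  have hmeas : ∀ x, AEStronglyMeasurable (fun y => Gam g (x + y) - Gam g y) μ := fun x =>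
    (((continuous_Gam_s19 hg_cont hM).comp (continuous_const_add x)).sub
      (continuous_Gam_s19 hg_cont hM)).aestronglyMeasurable
  exact ⟨fun x => Integrable.of_bound (hmeas x) _ (ae_of_all _ (hbound x)),
    tendsto_integral_atTop_of_tendsto_div hmeas hbound tendsto_comap
      (tendsto_Gam_add_sub_div_norm hg_cont hM hg_lim) hginf_pos⟩

theorem renormalized_energy_finite_and_coercive {n : ℕ} (hn : 1 ≤ n)
    (g : ℝ → ℝ) (hg_cont : ContinuousOn g (Ici 0)) (hg0 : g 0 = 0)
    (ginf : ℝ) (hginf_pos : 0 < ginf) (hg_lim : Tendsto g atTop (𝓝 ginf))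
    (μ : Measure (EuclideanSpace ℝ (Fin n)))
    (hμpos : 0 < μ Set.univ) (hμfin : μ Set.univ < ⊤) :
    (∀ x : EuclideanSpace ℝ (Fin n),
      Integrable (fun y => Gam g (x + y) - Gam g y) μ) ∧
    Tendsto (fun x : EuclideanSpace ℝ (Fin n) => ∫ y, (Gam g (x + y) - Gam g y) ∂μ)
      (comap (fun x : EuclideanSpace ℝ (Fin n) => ‖x‖) atTop) atTop :=
  renormalized_energy_finite_and_coercive_general g hg_cont ginf hginf_pos hg_lim μ hμpos hμfin
end
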